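/- arXiv:2505.07098 — 5 statements merged into one kernel-verified Lean document; each statement's English description precedes it below -/
import Mathlib

section
/- Let λ be a partition of n, and let μ be the content associated to a weak composition comp_n(J) for a multiset J of elements in {0,...,n} (i.e., the multiplicity of h in μ equals the h-th entry of comp_n(J)). Then standardization gives a bijection between semistandard Young tableaux of shape λ and content μ and the set of standard Young tableaux S of shape λ whose descent set Dsi(S) is contained in the support of J (those elements of {1,...,n−1} appearing in J with positive multiplicity). -/
open MvPolynomial

noncomputable section
open scoped Classical

namespace GHS

def entrySumF (μ : YoungDiagram) (f : ℕ → ℕ → ℕ) : ℕ := ∑ c ∈ μ.cells, f c.1 c.2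

def entryFun {μ : YoungDiagram} (M : SemistandardYoungTableau μ) : ℕ → ℕ → ℕ := fun r c => M r c

def entrySum {μ : YoungDiagram} (M : SemistandardYoungTableau μ) : ℕ := entrySumF μ (entryFun M)

def entryMultisetF (μ : YoungDiagram) (f : ℕ → ℕ → ℕ) : Multiset ℕ :=
  μ.cells.val.map fun c => f c.1 c.2

def entryMultiset {μ : YoungDiagram} (M : SemistandardYoungTableau μ) : Multiset ℕ := entryMultisetF μ (entryFun M)

def countLtF (μ : YoungDiagram) (f : ℕ → ℕ → ℕ) (h : ℕ) : ℕ :=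
  (μ.cells.filter fun c => f c.1 c.2 < h).card

def countGe {μ : YoungDiagram} (M : SemistandardYoungTableau μ) (t : ℕ) : ℕ :=
  (μ.cells.filter fun c => t ≤ M c.1 c.2).card

def maxEntryF (μ : YoungDiagram) (f : ℕ → ℕ → ℕ) : ℕ := μ.cells.sup fun c => f c.1 c.2

def DspCF (n : ℕ) (μ : YoungDiagram) (f : ℕ → ℕ → ℕ) : Multiset ℕ :=
  (Finset.Icc 1 (maxEntryF μ f)).val.map fun h => n - countLtF μ f h

def DspC (n : ℕ) {μ : YoungDiagram} (M : SemistandardYoungTableau μ) : Multiset ℕ := DspCF n μ (entryFun M)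

def stdFun (μ : YoungDiagram) (f : ℕ → ℕ → ℕ) : ℕ → ℕ → ℕ := fun r c =>
  if (r, c) ∈ μ then
    (μ.cells.filter fun c' => f c'.1 c'.2 < f r c ∨ (f c'.1 c'.2 = f r c ∧ c'.2 < c)).card + 1
  else 0

def IsStandard (n : ℕ) {μ : YoungDiagram} (S : SemistandardYoungTableau μ) : Prop :=
  entryMultiset S = (Multiset.range n).map (· + 1)

def rowOfF (f : ℕ → ℕ → ℕ) (v : ℕ) : ℕ := sInf {r | ∃ c, f r c = v}

def DsiSet (n : ℕ) {μ : YoungDiagram} (S : SemistandardYoungTableau μ) : Finset ℕ :=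
  (Finset.Ioo 0 n).filter fun i => rowOfF (entryFun S) i < rowOfF (entryFun S) (i + 1)

def jseq (n k : ℕ) (J : Multiset ℕ) (h : ℕ) : ℕ :=
  if h = 0 then 0 else if h = k then n else (J.sort (· ≤ ·)).getD (h - 1) 0

def compFun (n k : ℕ) (J : Multiset ℕ) (h : ℕ) : ℕ := jseq n k J (h + 1) - jseq n k J h

def compMap (n k : ℕ) (J : Multiset ℕ) : Fin k → ℕ := fun h => compFun n k J (h : ℕ)

def contentOfJ (n k : ℕ) (J : Multiset ℕ) : Multiset ℕ :=
  (Multiset.range k).bind fun h => Multiset.replicate (compFun n k J h) h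

def IsTabloid (n : ℕ) (μ : YoungDiagram) (T : Fin n → ℕ × ℕ) : Prop :=
  Function.Injective T ∧ ∀ i, T i ∈ μ

def IsStdFill (n : ℕ) (T : Fin n → ℕ × ℕ) : Prop :=
  ∀ i j : Fin n,
    (((T i).1 = (T j).1 ∧ (T i).2 < (T j).2) ∨ ((T i).2 = (T j).2 ∧ (T i).1 < (T j).1)) → i < j

def rowGroup (n : ℕ) (T : Fin n → ℕ × ℕ) : Finset (Equiv.Perm (Fin n)) :=
  Finset.univ.filter fun τ => ∀ i, (T (τ i)).1 = (T i).1

def colGroup (n : ℕ) (T : Fin n → ℕ × ℕ) : Finset (Equiv.Perm (Fin n)) :=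
  Finset.univ.filter fun σ => ∀ i, (T (σ i)).2 = (T i).2

def pmonF (n : ℕ) (f : ℕ → ℕ → ℕ) (T : Fin n → ℕ × ℕ) : MvPolynomial (Fin n) ℚ :=
  ∏ i, X i ^ f (T i).1 (T i).2

def pexpF (n : ℕ) (f : ℕ → ℕ → ℕ) (T : Fin n → ℕ × ℕ) : Fin n →₀ ℕ :=
  Finsupp.equivFunOnFinite.symm fun i => f (T i).1 (T i).2

def symRT (n : ℕ) (T : Fin n → ℕ × ℕ) (p : MvPolynomial (Fin n) ℚ) : MvPolynomial (Fin n) ℚ :=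
  ∑ τ ∈ rowGroup n T, rename (⇑τ) p

def antisym (n : ℕ) (T : Fin n → ℕ × ℕ) (p : MvPolynomial (Fin n) ℚ) : MvPolynomial (Fin n) ℚ :=
  ∑ σ ∈ colGroup n T, ((Equiv.Perm.sign σ : ℤ) : ℚ) • rename (⇑σ) p

def youngSym (n : ℕ) (T : Fin n → ℕ × ℕ) (p : MvPolynomial (Fin n) ℚ) : MvPolynomial (Fin n) ℚ :=
  antisym n T (symRT n T p)

def stabCardF (n : ℕ) (f : ℕ → ℕ → ℕ) (T : Fin n → ℕ × ℕ) : ℕ :=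
  ((rowGroup n T).filter fun τ : Equiv.Perm (Fin n) => rename (⇑τ) (pmonF n f T) = pmonF n f T).card

def rowPoly (n : ℕ) (f : ℕ → ℕ → ℕ) (T : Fin n → ℕ × ℕ) : MvPolynomial (Fin n) ℚ :=
  (stabCardF n f T : ℚ)⁻¹ • symRT n T (pmonF n f T)

def FMTF (n : ℕ) (f : ℕ → ℕ → ℕ) (T : Fin n → ℕ × ℕ) : MvPolynomial (Fin n) ℚ :=
  (stabCardF n f T : ℚ)⁻¹ • youngSym n T (pmonF n f T)

def FMT (n : ℕ) {μ : YoungDiagram} (M : SemistandardYoungTableau μ) (T : Fin n → ℕ × ℕ) : MvPolynomial (Fin n) ℚ :=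
  FMTF n (entryFun M) T

def degT (n : ℕ) (T : Fin n → ℕ × ℕ) (d : Fin n →₀ ℕ) (j : ℕ) : ℕ :=
  ∑ i ∈ Finset.univ.filter fun i => (T i).2 = j, d i

def gtT (n : ℕ) (T : Fin n → ℕ × ℕ) (d e : Fin n →₀ ℕ) : Prop :=
  ∃ j, degT n T e j < degT n T d j ∧ ∀ j', j < j' → degT n T d j' = degT n T e j'

def VMF (n : ℕ) (μ : YoungDiagram) (f : ℕ → ℕ → ℕ) : Submodule ℚ (MvPolynomial (Fin n) ℚ) :=
  Submodule.span ℚ {p | ∃ T, IsTabloid n μ T ∧ p = FMTF n f T}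

def VM (n : ℕ) {μ : YoungDiagram} (M : SemistandardYoungTableau μ) : Submodule ℚ (MvPolynomial (Fin n) ℚ) :=
  VMF n μ (entryFun M)

def spechtP (n : ℕ) (T : Fin n → ℕ × ℕ) : MvPolynomial (Fin n) ℚ := ∏ i, X i ^ (T i).1

def SpechtSub (n : ℕ) (μ : YoungDiagram) : Submodule ℚ (MvPolynomial (Fin n) ℚ) :=
  Submodule.span ℚ {p | ∃ T, IsTabloid n μ T ∧ p = youngSym n T (spechtP n T)}

def EqHoms (n : ℕ) (W V : Submodule ℚ (MvPolynomial (Fin n) ℚ)) :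
    Submodule ℚ (W →ₗ[ℚ] MvPolynomial (Fin n) ℚ) where
  carrier := {g | (∀ x, g x ∈ V) ∧ ∀ (σ : Equiv.Perm (Fin n)) (x y : W),
      (y : MvPolynomial (Fin n) ℚ) = rename (⇑σ) (x : MvPolynomial (Fin n) ℚ) →
      g y = rename (⇑σ) (g x)}
  add_mem' := by
    rintro a b ⟨ha1, ha2⟩ ⟨hb1, hb2⟩
    refine ⟨fun x => ?_, fun σ x y hxy => ?_⟩
    · simpa using V.add_mem (ha1 x) (hb1 x)
    · simp [LinearMap.add_apply, map_add, ha2 σ x y hxy, hb2 σ x y hxy]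
  zero_mem' := ⟨fun x => by simp, fun σ x y hxy => by simp⟩
  smul_mem' := by
    rintro c a ⟨ha1, ha2⟩
    refine ⟨fun x => ?_, fun σ x y hxy => ?_⟩
    · simpa using V.smul_mem c (ha1 x)
    · simp [LinearMap.smul_apply, map_smul, ha2 σ x y hxy]

def multiplicityIn (n : ℕ) (W V : Submodule ℚ (MvPolynomial (Fin n) ℚ)) : ℕ :=
  Module.finrank ℚ ↑(EqHoms n W V)

def contentSub (n : ℕ) (μc : Multiset ℕ) : Submodule ℚ (MvPolynomial (Fin n) ℚ) :=
  Submodule.span ℚ {p | ∃ d : Fin n → ℕ, Finset.univ.val.map d = μc ∧ p = ∏ i, X i ^ d i}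

def padded (n : ℕ) (μc : Multiset ℕ) : Multiset ℕ :=
  μc + Multiset.replicate (n - Multiset.card μc) 0

def IsCocharge {μ : YoungDiagram} (C : SemistandardYoungTableau μ) : Prop :=
  ∀ h : ℕ, 0 < h → ∀ v ∈ μ.cells, C v.1 v.2 = h →
    (∀ v' ∈ μ.cells, C v'.1 v'.2 = h → v.2 ≤ v'.2) →
    ∃ v'' ∈ μ.cells, C v''.1 v''.2 = h - 1 ∧ v''.1 < v.1

def updF (f : ℕ → ℕ → ℕ) (r c v : ℕ) : ℕ → ℕ → ℕ :=
  fun r' c' => if r' = r ∧ c' = c then v else f r' c'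

def slide : ℕ → (ℕ → ℕ → ℕ) → ℕ × ℕ → (ℕ → ℕ → ℕ) × (ℕ × ℕ)
  | 0, f, p => (f, p)
  | fuel + 1, f, (r, c) =>
    let down := f (r + 1) c
    let right := f r (c + 1)
    if down = 0 ∧ right = 0 then (f, (r, c))
    else if right = 0 ∨ (down ≠ 0 ∧ down < right) then
      slide fuel (updF (updF f r c down) (r + 1) c 0) (r + 1, c)
    else
      slide fuel (updF (updF f r c right) r (c + 1) 0) (r, c + 1)

def evacAux : ℕ → (ℕ → ℕ → ℕ) → ℕ → ℕ → ℕ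
  | 0, _ => fun _ _ => 0
  | m + 1, f =>
    let gp := slide (m + 1) (updF f 0 0 0) (0, 0)
    updF (evacAux m gp.1) gp.2.1 gp.2.2 (m + 1)

def ctJfun (J : Multiset ℕ) (f : ℕ → ℕ → ℕ) : ℕ → ℕ → ℕ :=
  fun r c => J.countP fun j => j < f r c

def JminF (μ : YoungDiagram) (f : ℕ → ℕ → ℕ) : Multiset ℕ :=
  (Finset.Icc 1 (maxEntryF μ f)).val.map fun h => countLtF μ f h

def deltaOne (n : ℕ) (μ : YoungDiagram) (f : ℕ → ℕ → ℕ) (v : ℕ × ℕ) : Prop :=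
  ¬ (rowOfF (evacAux n (stdFun μ f)) n < v.1)

def hatAdd (n : ℕ) (μ : YoungDiagram) (f : ℕ → ℕ → ℕ) (v : ℕ × ℕ) : ℕ → ℕ → ℕ :=
  let Sv := evacAux (n + 1) (updF (evacAux n (stdFun μ f)) v.1 v.2 (n + 1))
  let Jp : Multiset ℕ := (JminF μ f).map (· + 1)
  if deltaOne n μ f v then ctJfun Jp Sv else ctJfun (1 ::ₘ Jp) Sv

def iotaHatFun (f : ℕ → ℕ → ℕ) : ℕ → ℕ → ℕ :=
  fun r c => if r = 0 then (if c = 0 then 0 else f 0 (c - 1)) else f r c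

def iotaT (n : ℕ) (lam : YoungDiagram) (T : Fin n → ℕ × ℕ) : Fin (n + 1) → ℕ × ℕ :=
  fun i => if h : (i : ℕ) < n then T ⟨(i : ℕ), h⟩ else (0, lam.rowLen 0)

def plusOneF (μ : YoungDiagram) (f : ℕ → ℕ → ℕ) : ℕ → ℕ → ℕ :=
  fun r c => if (r, c) ∈ μ then f r c + 1 else 0

def Omega (n : ℕ) (α : ℕ → ℕ) :=
  {w : Fin n → ℕ // ∀ h, (Finset.univ.filter fun i => w i = h).card = α h}

def shiftW (n : ℕ) (α : ℕ → ℕ) (σ : Equiv.Perm (Fin n)) (w : Omega n α) : Omega n α :=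
  ⟨fun i => w.1 (σ.symm i), by
    intro h
    have key : (Finset.univ.filter fun i => w.1 (σ.symm i) = h)
        = (Finset.univ.filter fun i => w.1 i = h).image σ := by
      ext i
      simp only [Finset.mem_filter, Finset.mem_univ, true_and, Finset.mem_image]
      constructor
      · intro hi
        exact ⟨σ.symm i, hi, Equiv.apply_symm_apply σ i⟩
      · rintro ⟨j, hj, rfl⟩
        simpa using hj
    rw [key, Finset.card_image_of_injective _ σ.injective]
    exact w.2 h⟩

def permOmega (n : ℕ) (α : ℕ → ℕ) (σ : Equiv.Perm (Fin n)) : Omega n α ≃ Omega n α where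
  toFun := shiftW n α σ
  invFun := shiftW n α σ⁻¹
  left_inv w := by
    apply Subtype.ext
    funext i
    simp [shiftW, Equiv.Perm.inv_def]
  right_inv w := by
    apply Subtype.ext
    funext i
    simp [shiftW, Equiv.Perm.inv_def]

def ExtPart (n d : ℕ) : Submodule ℚ (MvPolynomial (Fin (n + 1)) ℚ) :=
  ⨆ (lam : YoungDiagram) (_ : lam.card = n) (M : SemistandardYoungTableau lam) (_ : entrySum M = d)
    (v : ℕ × ℕ) (_ : v ∉ lam.cells) (ν : YoungDiagram) (_ : ν.cells = insert v lam.cells)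
    (_ : deltaOne n lam (entryFun M) v),
    VMF (n + 1) ν (hatAdd n lam (entryFun M) v)

def LEPart (n d : ℕ) : Submodule ℚ (MvPolynomial (Fin (n + 1)) ℚ) :=
  ⨆ (lam : YoungDiagram) (_ : lam.card = n) (M : SemistandardYoungTableau lam) (_ : entrySum M + n = d)
    (v : ℕ × ℕ) (_ : v ∉ lam.cells) (ν : YoungDiagram) (_ : ν.cells = insert v lam.cells)
    (_ : ¬ deltaOne n lam (entryFun M) v),
    VMF (n + 1) ν (hatAdd n lam (entryFun M) v)

def EPart (n d : ℕ) : Submodule ℚ (MvPolynomial (Fin (n + 1)) ℚ) :=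
  ⨆ (e : ℕ) (_ : e + (n + 1) = d),
    (homogeneousSubmodule (Fin (n + 1)) ℚ e).map
      (LinearMap.mulLeft ℚ (∏ i : Fin (n + 1), (X i : MvPolynomial (Fin (n + 1)) ℚ)))

/-
Standardization numbers the cells of `M` by increasing entry, equal entries (which form a
horizontal strip) from left to right. As `M` has content `comp_n(J)`, the cells with entries
`≤ h` receive exactly the numbers `1, …, j_{h+1}`, where `j_1 ≤ … ≤ j_{k-1}` are the
elements of `J`. Hence `M` is recovered from `S = std M` as `M(u) = #{j ∈ J | j < S(u)}`,
and a descent `i` of `S`, which cannot occur inside a horizontal strip, is one of the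
`j_{h+1}`, so lies in `J`. Conversely, if `Dsi(S) ⊆ J`, then between consecutive elements of
`J` the entries of `S` move weakly up and strictly right, which makes
`u ↦ #{j ∈ J | j < S(u)}` semistandard of content `comp_n(J)` with standardization `S`.
-/

lemma monotone_countP_lt (J : Multiset ℕ) : Monotone fun v => J.countP (· < v) :=
  fun a b hab => by
    simp only [Multiset.countP_eq_card_filter]
    exact Multiset.card_le_card (Multiset.monotone_filter_right _ fun x hx => hx.trans_le hab)

lemma countP_lt_lt_countP_lt_of_mem {J : Multiset ℕ} {a b t : ℕ} (ht : t ∈ J) (hat : a ≤ t)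
    (htb : t < b) : J.countP (· < a) < J.countP (· < b) := by
  simp only [Multiset.countP_eq_card_filter]
  refine Multiset.card_lt_card (lt_of_le_of_ne
    (Multiset.monotone_filter_right _ fun x hx => hx.trans_le (hat.trans htb.le)) fun h => ?_)
  have : t ∈ J.filter (· < b) := Multiset.mem_filter.2 ⟨ht, htb⟩
  rw [← h, Multiset.mem_filter] at this
  omega

lemma _root_.Multiset.eq_of_forall_countP_le_eq {s t : Multiset ℕ}
    (h : ∀ a, s.countP (· ≤ a) = t.countP (· ≤ a)) : s = t := by
  have hsucc : ∀ (u : Multiset ℕ) b,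
      u.countP (· ≤ b + 1) = u.countP (· ≤ b) + u.count (b + 1) := by
    intro u b
    induction u using Multiset.induction_on with
    | empty => simp
    | cons x u ih =>
      simp only [Multiset.countP_cons, Multiset.count_cons, ih]
      split_ifs <;> omega
  ext a
  rcases a with _ | b
  · simpa [Multiset.count_eq_card_filter_eq, Multiset.countP_eq_card_filter, eq_comm] using h 0
  · have := hsucc s b
    have := hsucc t b
    have := h b
    have := h (b + 1)
    omega

lemma _root_.List.Pairwise.countP_lt_le_iff {L : List ℕ} (hL : L.Pairwise (· ≤ ·)) {v h : ℕ}
    (hh : h < L.length) : L.countP (· < v) ≤ h ↔ v ≤ L[h] := by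
  induction L generalizing h with
  | nil => simp at hh
  | cons a T ih =>
    obtain ⟨ha, hT⟩ := List.pairwise_cons.1 hL
    by_cases hav : a < v
    · rw [List.countP_cons_of_pos (by simpa using hav)]
      cases h with
      | zero => exact iff_of_false (by omega) (by simpa using hav)
      | succ h => simpa using ih hT (h := h) (by simpa using hh)
    · have hzero : (a :: T).countP (· < v) = 0 := List.countP_eq_zero.2 fun x hx => by
        rcases List.mem_cons.1 hx with rfl | hx
        · simpa using hav
        · simpa using fun hlt => hav ((ha x hx).trans_lt hlt)
      have hle : a ≤ (a :: T)[h] := by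
        cases h with
        | zero => exact le_rfl
        | succ h => exact ha _ (List.getElem_mem _)
      simp only [hzero, zero_le, true_iff]
      omega

lemma countP_lt_map_succ_range {n v : ℕ} (hv : v ≤ n + 1) :
    ((Multiset.range n).map (· + 1)).countP (· < v) = v - 1 := by
  rw [Multiset.countP_map, ← Finset.range_val, ← Finset.filter_val, Finset.card_val]
  rw [show (Finset.range n).filter (fun a => a + 1 < v) = Finset.range (v - 1) by
    ext a; simp only [Finset.mem_filter, Finset.mem_range]; omega]
  exact Finset.card_range _

section Compositions

variable {n k : ℕ} {J : Multiset ℕ}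

lemma jseq_of_lt {h : ℕ} (h0 : 0 < h) (hk : h < k) :
    jseq n k J h = (J.sort (· ≤ ·)).getD (h - 1) 0 := by
  rw [jseq, if_neg h0.ne', if_neg hk.ne]

lemma jseq_mem (hJcard : Multiset.card J = k - 1) {h : ℕ} (h0 : 0 < h) (hk : h < k) :
    jseq n k J h ∈ J := by
  have hlen : h - 1 < (J.sort (· ≤ ·)).length := by rw [Multiset.length_sort]; omega
  rw [jseq_of_lt h0 hk, List.getD_eq_getElem _ _ hlen]
  exact (Multiset.mem_sort _).1 (List.getElem_mem hlen)

lemma jseq_self (hk : 1 ≤ k) : jseq n k J k = n := by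
  rw [jseq, if_neg (by omega), if_pos rfl]

lemma jseq_le (hJ : ∀ j ∈ J, j ≤ n) (h : ℕ) : jseq n k J h ≤ n := by
  unfold jseq
  split_ifs
  · exact Nat.zero_le n
  · exact le_rfl
  · rw [List.getD_eq_getElem?_getD]
    cases hget : (J.sort (· ≤ ·))[h - 1]? with
    | none => exact Nat.zero_le n
    | some j => exact hJ j ((Multiset.mem_sort _).1 (List.mem_of_getElem? hget))

lemma jseq_mono (hk : 1 ≤ k) (hJcard : Multiset.card J = k - 1) (hJ : ∀ j ∈ J, j ≤ n)
    {a b : ℕ} (hab : a ≤ b) (hbk : b ≤ k) : jseq n k J a ≤ jseq n k J b := by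
  rcases Nat.eq_zero_or_pos a with rfl | ha
  · simp [jseq]
  rcases hbk.eq_or_lt with rfl | hbk
  · exact jseq_self (J := J) hk ▸ jseq_le hJ a
  have hlen : (J.sort (· ≤ ·)).length = k - 1 := by rw [Multiset.length_sort, hJcard]
  rw [jseq_of_lt ha (hab.trans_lt hbk), jseq_of_lt (ha.trans_le hab) hbk,
    List.getD_eq_getElem _ _ (by omega), List.getD_eq_getElem _ _ (by omega)]
  rcases (show a - 1 ≤ b - 1 by omega).eq_or_lt with heq | hlt
  · simp [heq]
  · exact List.pairwise_iff_getElem.1 (Multiset.pairwise_sort J _) _ _ _ _ hlt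

-- The multiplicities `j_{i+1} - j_i` telescope.
lemma countP_le_contentOfJ (hk : 1 ≤ k) (hJcard : Multiset.card J = k - 1)
    (hJ : ∀ j ∈ J, j ≤ n) (h : ℕ) :
    (contentOfJ n k J).countP (· ≤ h) = jseq n k J (min (h + 1) k) := by
  suffices H : ∀ t ≤ k, ((Multiset.range t).bind fun i =>
      Multiset.replicate (compFun n k J i) i).countP (· ≤ h) = jseq n k J (min (h + 1) t) from
    H k le_rfl
  intro t ht
  induction t with
  | zero => simp [jseq]
  | succ t ih =>
    have hmono := jseq_mono (n := n) hk hJcard hJ (Nat.le_add_right t 1) ht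
    rw [Multiset.range_succ, Multiset.cons_bind, Multiset.countP_add, ih (by omega),
      ← Multiset.coe_replicate, Multiset.coe_countP, List.countP_replicate, compFun]
    by_cases hth : t ≤ h
    · rw [if_pos (by simpa using hth), min_eq_right (by omega : t ≤ h + 1),
        min_eq_right (by omega : t + 1 ≤ h + 1)]
      omega
    · rw [if_neg (by simpa using hth), min_eq_left (by omega : h + 1 ≤ t),
        min_eq_left (by omega : h + 1 ≤ t + 1), zero_add]

lemma countP_lt_le_iff (hk : 1 ≤ k) (hJcard : Multiset.card J = k - 1) {v : ℕ} (hv : v ≤ n)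
    (h : ℕ) : J.countP (· < v) ≤ h ↔ v ≤ jseq n k J (min (h + 1) k) := by
  rcases Nat.lt_or_ge (h + 1) k with hhk | hhk
  · have hlen : h < (J.sort (· ≤ ·)).length := by rw [Multiset.length_sort]; omega
    rw [min_eq_left hhk.le, jseq_of_lt (by omega) hhk, Nat.add_sub_cancel,
      List.getD_eq_getElem _ _ hlen, ← (Multiset.pairwise_sort J _).countP_lt_le_iff,
      ← Multiset.coe_countP, Multiset.sort_eq]
  · rw [min_eq_right hhk, jseq_self hk]
    exact iff_of_true ((Multiset.countP_le_card _ _).trans (by omega)) hv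

end Compositions

section Standardization

variable {lam : YoungDiagram}

-- Standardization numbers the cells by entry, breaking ties from left to right.
def stdKey (f : ℕ → ℕ → ℕ) (u : ℕ × ℕ) : ℕ ×ₗ ℕ := toLex (f u.1 u.2, u.2)

def stdRank (μ : YoungDiagram) (f : ℕ → ℕ → ℕ) (u : ℕ × ℕ) : ℕ :=
  (μ.cells.filter fun w => stdKey f w < stdKey f u).card

lemma stdFun_eq_ite (μ : YoungDiagram) (f : ℕ → ℕ → ℕ) (r c : ℕ) :
    stdFun μ f r c = if (r, c) ∈ μ then stdRank μ f (r, c) + 1 else 0 := by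
  simp only [stdFun, stdRank, stdKey, Prod.Lex.toLex_lt_toLex]

lemma _root_.SemistandardYoungTableau.row_le_of_entry_eq_of_col_lt
    (M : SemistandardYoungTableau lam) {w u : ℕ × ℕ} (hu : u ∈ lam)
    (hval : M w.1 w.2 = M u.1 u.2) (hc : w.2 < u.2) : u.1 ≤ w.1 := by
  by_contra! hlt
  have h1 := M.col_strict hlt (lam.up_left_mem le_rfl hc.le hu)
  have h2 := M.row_weak hc hu
  omega

lemma stdKey_injOn (M : SemistandardYoungTableau lam) :
    Set.InjOn (stdKey (entryFun M)) lam.cells := by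
  rintro ⟨wr, wc⟩ hw ⟨ur, uc⟩ hu heq
  simp only [stdKey, toLex_inj, Prod.mk.injEq, entryFun] at heq
  obtain ⟨hval, rfl⟩ := heq
  rcases lt_trichotomy wr ur with h | rfl | h
  · exact absurd hval (M.col_strict h hu).ne
  · rfl
  · exact absurd hval (M.col_strict h hw).ne'

lemma stdRank_lt_stdRank {f : ℕ → ℕ → ℕ} {w u : ℕ × ℕ} (hw : w ∈ lam.cells)
    (h : stdKey f w < stdKey f u) : stdRank lam f w < stdRank lam f u := by
  refine Finset.card_lt_card ((Finset.ssubset_iff_of_subset ?_).2 ⟨w, ?_, ?_⟩)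
  · exact Finset.monotone_filter_right _ fun x _ hx => lt_trans hx h
  · simp [hw, h]
  · simp

lemma stdRank_lt_card {f : ℕ → ℕ → ℕ} {u : ℕ × ℕ} (hu : u ∈ lam.cells) :
    stdRank lam f u < lam.card :=
  Finset.card_lt_card <| Finset.filter_ssubset.2 ⟨u, hu, lt_irrefl (stdKey f u)⟩

lemma stdRank_injOn (M : SemistandardYoungTableau lam) :
    Set.InjOn (stdRank lam (entryFun M)) lam.cells := fun w hw u hu h =>
  stdKey_injOn M hw hu <| by
    rcases lt_trichotomy (stdKey (entryFun M) w) (stdKey (entryFun M) u) with hlt | heq | hgt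
    · exact absurd h (stdRank_lt_stdRank hw hlt).ne
    · exact heq
    · exact absurd h (stdRank_lt_stdRank hu hgt).ne'

lemma map_stdRank (M : SemistandardYoungTableau lam) :
    lam.cells.val.map (stdRank lam (entryFun M)) = Multiset.range lam.card := by
  have himage : lam.cells.image (stdRank lam (entryFun M)) = Finset.range lam.card :=
    Finset.eq_of_subset_of_card_le
      (Finset.image_subset_iff.2 fun u hu => Finset.mem_range.2 (stdRank_lt_card hu))
      (by rw [Finset.card_range, Finset.card_image_of_injOn (stdRank_injOn M)])
  rw [← Finset.range_val, ← himage, Finset.image_val,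
    Multiset.dedup_eq_self.2 (lam.cells.nodup.map_on (stdRank_injOn M))]

def standardize (M : SemistandardYoungTableau lam) : SemistandardYoungTableau lam where
  entry := stdFun lam (entryFun M)
  row_weak' {i j1 j2} hj hmem := by
    have hmem1 := lam.up_left_mem le_rfl hj.le hmem
    rw [stdFun_eq_ite, stdFun_eq_ite, if_pos hmem1, if_pos hmem]
    refine Nat.succ_le_succ (stdRank_lt_stdRank hmem1 ?_).le
    exact Prod.Lex.toLex_lt_toLex.2 ((M.row_weak hj hmem).lt_or_eq.imp id fun h => ⟨h, hj⟩)
  col_strict' {i1 i2 j} hi hmem := by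
    have hmem1 := lam.up_left_mem hi.le le_rfl hmem
    rw [stdFun_eq_ite, stdFun_eq_ite, if_pos hmem1, if_pos hmem]
    exact Nat.succ_lt_succ (stdRank_lt_stdRank hmem1 (Prod.Lex.toLex_lt_toLex.2
      (Or.inl (M.col_strict hi hmem))))
  zeros' hmem := by rw [stdFun_eq_ite, if_neg hmem]

lemma standardize_apply (M : SemistandardYoungTableau lam) (r c : ℕ) :
    standardize M r c = stdFun lam (entryFun M) r c := rfl

lemma standardize_apply_of_mem (M : SemistandardYoungTableau lam) {u : ℕ × ℕ}
    (hu : u ∈ lam.cells) : standardize M u.1 u.2 = stdRank lam (entryFun M) u + 1 := by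
  rw [standardize_apply, stdFun_eq_ite, if_pos (show (u.1, u.2) ∈ lam from hu)]

lemma isStandard_standardize {n : ℕ} (M : SemistandardYoungTableau lam) (hcard : lam.card = n) :
    IsStandard n (standardize M) := by
  rw [IsStandard, ← hcard, ← map_stdRank M, Multiset.map_map]
  exact Multiset.map_congr rfl fun u hu => standardize_apply_of_mem M hu

lemma card_filter_cells_eq_countP (f : ℕ → ℕ → ℕ) (p : ℕ → Prop) [DecidablePred p] :
    (lam.cells.filter fun w => p (f w.1 w.2)).card = (entryMultisetF lam f).countP p := by
  rw [entryMultisetF, Multiset.countP_map]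
  rfl

lemma entry_le_iff_standardize_le (M : SemistandardYoungTableau lam) {u : ℕ × ℕ}
    (hu : u ∈ lam.cells) (h : ℕ) :
    M u.1 u.2 ≤ h ↔ standardize M u.1 u.2 ≤ (entryMultiset M).countP (· ≤ h) := by
  have hnotmem : u ∉ lam.cells.filter fun w => stdKey (entryFun M) w < stdKey (entryFun M) u := by
    simp
  rw [standardize_apply_of_mem M hu, entryMultiset,
    ← card_filter_cells_eq_countP (entryFun M) (· ≤ h), stdRank,
    ← Finset.card_insert_of_notMem hnotmem]
  constructor
  · intro hle
    refine Finset.card_le_card (Finset.insert_subset (Finset.mem_filter.2 ⟨hu, hle⟩) ?_)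
    intro w hw
    rw [Finset.mem_filter] at hw ⊢
    exact ⟨hw.1, le_trans (Prod.Lex.monotone_fst _ _ hw.2.le) hle⟩
  · intro hle
    by_contra! hgt
    have hsub : (lam.cells.filter fun w => entryFun M w.1 w.2 ≤ h) ⊆
        lam.cells.filter fun w => stdKey (entryFun M) w < stdKey (entryFun M) u := by
      intro w hw
      rw [Finset.mem_filter] at hw ⊢
      exact ⟨hw.1, Prod.Lex.toLex_lt_toLex.2 (Or.inl (lt_of_le_of_lt hw.2 hgt))⟩
    have := Finset.card_le_card hsub
    rw [Finset.card_insert_of_notMem hnotmem] at hle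
    omega

lemma eq_of_standardize_eq {M M' : SemistandardYoungTableau lam}
    (hcontent : entryMultiset M = entryMultiset M') (hstd : standardize M = standardize M') :
    M = M' := by
  ext r c
  by_cases hmem : (r, c) ∈ lam
  · have key := fun N h => entry_le_iff_standardize_le (u := (r, c)) N hmem h
    refine le_antisymm ((key M _).2 ?_) ((key M' _).2 ?_)
    · rw [hstd, hcontent]; exact (key M' _).1 le_rfl
    · rw [← hstd, ← hcontent]; exact (key M _).1 le_rfl
  · rw [M.zeros hmem, M'.zeros hmem]

end Standardization

section StandardTableaux

variable {lam : YoungDiagram} {n : ℕ} {S : SemistandardYoungTableau lam}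

lemma IsStandard.entry_mem_Icc (hS : IsStandard n S) {u : ℕ × ℕ} (hu : u ∈ lam.cells) :
    S u.1 u.2 ∈ Finset.Icc 1 n := by
  have : S u.1 u.2 ∈ entryMultiset S := Multiset.mem_map_of_mem _ hu
  rw [hS] at this
  obtain ⟨t, ht, hteq⟩ := Multiset.mem_map.1 this
  rw [← hteq, Finset.mem_Icc]
  rw [Multiset.mem_range] at ht
  omega

lemma IsStandard.injOn (hS : IsStandard n S) :
    Set.InjOn (fun u : ℕ × ℕ => S u.1 u.2) lam.cells := by
  have hnodup : (entryMultiset S).Nodup := by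
    rw [hS]
    exact (Multiset.nodup_range n).map (add_left_injective 1)
  exact fun w hw u hu h => Multiset.inj_on_of_nodup_map hnodup w hw u hu h

lemma IsStandard.exists_mem (hS : IsStandard n S) {i : ℕ} (hi : i ∈ Finset.Icc 1 n) :
    ∃ u ∈ lam.cells, S u.1 u.2 = i := by
  rw [Finset.mem_Icc] at hi
  have : i ∈ entryMultiset S := by
    rw [hS]
    exact Multiset.mem_map.2 ⟨i - 1, Multiset.mem_range.2 (by omega), by omega⟩
  exact Multiset.mem_map.1 this

lemma IsStandard.rowOfF_entry (hS : IsStandard n S) {u : ℕ × ℕ} (hu : u ∈ lam.cells) :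
    rowOfF (entryFun S) (S u.1 u.2) = u.1 := by
  have hpos := (Finset.mem_Icc.1 (hS.entry_mem_Icc hu)).1
  have hrows : {r | ∃ c, entryFun S r c = S u.1 u.2} = {u.1} := by
    ext r
    refine ⟨fun ⟨c, hc⟩ => ?_, fun hr => ⟨u.2, by rw [hr]; rfl⟩⟩
    have hmem : (r, c) ∈ lam.cells := by
      by_contra hnot
      have : entryFun S r c = 0 := S.zeros hnot
      omega
    exact congrArg Prod.fst (hS.injOn hmem hu hc)
  rw [rowOfF, hrows, csInf_singleton]

lemma rowOfF_le_of_forall_notMem_DsiSet {a b : ℕ} (ha : 1 ≤ a) (hab : a ≤ b) (hb : b ≤ n)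
    (hdes : ∀ t, a ≤ t → t < b → t ∉ DsiSet n S) :
    rowOfF (entryFun S) b ≤ rowOfF (entryFun S) a := by
  induction b, hab using Nat.le_induction with
  | base => exact le_rfl
  | succ b hab ih =>
    have hnotDes : ¬ rowOfF (entryFun S) b < rowOfF (entryFun S) (b + 1) := fun hlt =>
      hdes b hab (Nat.lt_succ_self b)
        (Finset.mem_filter.2 ⟨Finset.mem_Ioo.2 ⟨by omega, by omega⟩, hlt⟩)
    have := ih (by omega) fun t hat htb => hdes t hat (by omega)
    omega

lemma IsStandard.col_lt_of_forall_notMem_DsiSet (hS : IsStandard n S) {w u : ℕ × ℕ}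
    (hw : w ∈ lam.cells) (hu : u ∈ lam.cells) (hlt : S w.1 w.2 < S u.1 u.2)
    (hdes : ∀ t, S w.1 w.2 ≤ t → t < S u.1 u.2 → t ∉ DsiSet n S) :
    u.1 ≤ w.1 ∧ w.2 < u.2 := by
  have hrow : u.1 ≤ w.1 := by
    rw [← hS.rowOfF_entry hu, ← hS.rowOfF_entry hw]
    exact rowOfF_le_of_forall_notMem_DsiSet (Finset.mem_Icc.1 (hS.entry_mem_Icc hw)).1
      hlt.le (Finset.mem_Icc.1 (hS.entry_mem_Icc hu)).2 hdes
  refine ⟨hrow, lt_of_not_ge fun hcol => hlt.not_ge ?_⟩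
  have hw' : (w.1, w.2) ∈ lam := hw
  exact (S.row_weak_of_le hcol (lam.up_left_mem hrow le_rfl hw')).trans (S.col_weak hrow hw')

lemma IsStandard.standardize_eq (hS : IsStandard n S) (M : SemistandardYoungTableau lam)
    (horder : ∀ w ∈ lam.cells, ∀ u ∈ lam.cells,
      stdKey (entryFun M) w < stdKey (entryFun M) u ↔ S w.1 w.2 < S u.1 u.2) :
    standardize M = S := by
  ext r c
  by_cases hmem : (r, c) ∈ lam
  · have hu : (r, c) ∈ lam.cells := hmem
    rw [standardize_apply_of_mem M (u := (r, c)) hu, stdRank,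
      Finset.filter_congr fun w hw => horder w hw _ hu]
    change (lam.cells.filter fun w => entryFun S w.1 w.2 < S r c).card + 1 = _
    rw [card_filter_cells_eq_countP (entryFun S) (· < S r c)]
    change (entryMultiset S).countP _ + 1 = _
    have hrange : 1 ≤ S r c ∧ S r c ≤ n := Finset.mem_Icc.1 (hS.entry_mem_Icc hu)
    rw [hS, countP_lt_map_succ_range (by omega)]
    omega
  · rw [(standardize M).zeros hmem, S.zeros hmem]

end StandardTableaux

section Descents

variable {lam : YoungDiagram} {n : ℕ}

lemma stdKey_lt_of_standardize_lt (M : SemistandardYoungTableau lam) {w u : ℕ × ℕ}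
    (hw : w ∈ lam.cells) (hu : u ∈ lam.cells)
    (hlt : standardize M w.1 w.2 < standardize M u.1 u.2) :
    stdKey (entryFun M) w < stdKey (entryFun M) u := by
  rw [standardize_apply_of_mem M hw, standardize_apply_of_mem M hu] at hlt
  rcases lt_trichotomy (stdKey (entryFun M) w) (stdKey (entryFun M) u) with h | h | h
  · exact h
  · rw [stdKey_injOn M hw hu h] at hlt
    exact absurd hlt (lt_irrefl _)
  · exact absurd (stdRank_lt_stdRank hu h) (by omega)

-- Equal entries of `M` form a horizontal strip numbered from left to right, so they produce
-- no descent: a descent sits where the entries of `M` jump.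
lemma exists_countP_le_eq_of_mem_DsiSet_standardize (M : SemistandardYoungTableau lam)
    (hcard : lam.card = n) {i : ℕ} (hi : i ∈ DsiSet n (standardize M)) :
    ∃ h, (entryMultiset M).countP (· ≤ h) = i := by
  have hS := isStandard_standardize M hcard
  obtain ⟨hi, hrow⟩ := Finset.mem_filter.1 hi
  obtain ⟨hi0, hin⟩ := Finset.mem_Ioo.1 hi
  obtain ⟨u, hu, hSu⟩ := hS.exists_mem (Finset.mem_Icc.2 ⟨hi0, hin.le⟩)
  obtain ⟨u', hu', hSu'⟩ := hS.exists_mem (i := i + 1) (Finset.mem_Icc.2 ⟨by omega, hin⟩)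
  rw [← hSu', ← hSu, hS.rowOfF_entry hu, hS.rowOfF_entry hu'] at hrow
  have hkey := stdKey_lt_of_standardize_lt M hu hu' (by omega)
  have hMlt : M u.1 u.2 < M u'.1 u'.2 := by
    rcases Prod.Lex.toLex_lt_toLex.1 hkey with h | ⟨heq, hcol⟩
    · exact h
    · exact absurd (M.row_le_of_entry_eq_of_col_lt hu' heq hcol) hrow.not_ge
  refine ⟨M u.1 u.2, le_antisymm ?_ ?_⟩
  · have := mt (entry_le_iff_standardize_le M hu' (M u.1 u.2)).2 hMlt.not_ge
    omega
  · exact hSu ▸ (entry_le_iff_standardize_le M hu _).1 le_rfl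

end Descents

section Destandardization

variable {lam : YoungDiagram} {n : ℕ} {J : Multiset ℕ} {S : SemistandardYoungTableau lam}

lemma IsStandard.col_lt_of_countP_lt_eq (hS : IsStandard n S) (hD : ∀ i ∈ DsiSet n S, i ∈ J)
    {w u : ℕ × ℕ} (hw : w ∈ lam.cells) (hu : u ∈ lam.cells) (hlt : S w.1 w.2 < S u.1 u.2)
    (heq : J.countP (· < S w.1 w.2) = J.countP (· < S u.1 u.2)) : u.1 ≤ w.1 ∧ w.2 < u.2 :=
  hS.col_lt_of_forall_notMem_DsiSet hw hu hlt fun t hwt htu hdes =>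
    (countP_lt_lt_countP_lt_of_mem (hD t hdes) hwt htu).ne heq

def destandardize (J : Multiset ℕ) (S : SemistandardYoungTableau lam) (hS : IsStandard n S)
    (hD : ∀ i ∈ DsiSet n S, i ∈ J) : SemistandardYoungTableau lam where
  entry r c := J.countP (· < S r c)
  row_weak' hj hmem := monotone_countP_lt J (S.row_weak hj hmem)
  col_strict' {i1 i2 j} hi hmem := by
    have hlt := S.col_strict hi hmem
    refine (monotone_countP_lt J hlt.le).lt_of_ne fun heq => ?_
    exact lt_irrefl j (hS.col_lt_of_countP_lt_eq hD (w := (i1, j)) (u := (i2, j))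
      (lam.up_left_mem hi.le le_rfl hmem) hmem hlt heq).2
  zeros' hmem := by simp [S.zeros hmem]

variable (hS : IsStandard n S) (hD : ∀ i ∈ DsiSet n S, i ∈ J)

lemma destandardize_apply (r c : ℕ) : destandardize J S hS hD r c = J.countP (· < S r c) := rfl

lemma stdKey_destandardize_lt_iff {w u : ℕ × ℕ} (hw : w ∈ lam.cells) (hu : u ∈ lam.cells) :
    stdKey (entryFun (destandardize J S hS hD)) w <
        stdKey (entryFun (destandardize J S hS hD)) u ↔ S w.1 w.2 < S u.1 u.2 := by
  simp only [stdKey, Prod.Lex.toLex_lt_toLex, entryFun, destandardize_apply]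
  constructor
  · rintro (hlt | ⟨heq, hcol⟩)
    · exact lt_of_not_ge fun hge => hlt.not_ge (monotone_countP_lt J hge)
    · rcases lt_trichotomy (S w.1 w.2) (S u.1 u.2) with h | h | h
      · exact h
      · exact absurd (congrArg Prod.snd (hS.injOn hw hu h)) hcol.ne
      · exact absurd (hS.col_lt_of_countP_lt_eq hD hu hw h heq.symm).2 hcol.not_gt
  · intro hlt
    rcases (monotone_countP_lt J hlt.le).lt_or_eq with h | h
    · exact Or.inl h
    · exact Or.inr ⟨h, (hS.col_lt_of_countP_lt_eq hD hw hu hlt h).2⟩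

lemma standardize_destandardize : standardize (destandardize J S hS hD) = S :=
  hS.standardize_eq _ fun _ hw _ hu => stdKey_destandardize_lt_iff hS hD hw hu

lemma entryMultiset_destandardize {k : ℕ} (hk : 1 ≤ k) (hJcard : Multiset.card J = k - 1)
    (hJ : ∀ j ∈ J, j ≤ n) : entryMultiset (destandardize J S hS hD) = contentOfJ n k J := by
  have hmap : entryMultiset (destandardize J S hS hD) =
      (entryMultiset S).map fun v => J.countP (· < v) := by
    rw [entryMultiset, entryMultisetF, entryMultiset, entryMultisetF, Multiset.map_map]
    rfl
  refine Multiset.eq_of_forall_countP_le_eq fun h => ?_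
  have hjn := jseq_le (k := k) hJ (min (h + 1) k)
  rw [hmap, hS, countP_le_contentOfJ hk hJcard hJ, Multiset.countP_map,
    ← Multiset.countP_eq_card_filter]
  refine (Multiset.countP_congr rfl fun v hv => propext ?_).trans
    ((countP_lt_map_succ_range (by omega)).trans (Nat.add_sub_cancel _ 1))
  obtain ⟨t, ht, rfl⟩ := Multiset.mem_map.1 hv
  rw [countP_lt_le_iff hk hJcard (Multiset.mem_range.1 ht) h]
  omega

end Destandardization

lemma mem_of_mem_DsiSet_standardize {n k : ℕ} (hk : 1 ≤ k) {lam : YoungDiagram}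
    (hcard : lam.card = n) {J : Multiset ℕ} (hJcard : Multiset.card J = k - 1)
    (hJ : ∀ j ∈ J, j ≤ n) {M : SemistandardYoungTableau lam}
    (hM : entryMultiset M = contentOfJ n k J) {i : ℕ} (hi : i ∈ DsiSet n (standardize M)) :
    i ∈ J := by
  obtain ⟨h, hh⟩ := exists_countP_le_eq_of_mem_DsiSet_standardize M hcard hi
  rw [hM, countP_le_contentOfJ hk hJcard hJ] at hh
  have hin := Finset.mem_Ioo.1 (Finset.mem_filter.1 hi).1
  have hlt : min (h + 1) k < k := by
    by_contra hge
    rw [min_eq_right (by omega), jseq_self hk] at hh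
    omega
  exact hh ▸ jseq_mem hJcard (by omega) hlt

theorem stmt1_general (n k : ℕ) (hk : 1 ≤ k)
    (lam : YoungDiagram) (hcard : lam.card = n)
    (J : Multiset ℕ) (hJcard : Multiset.card J = k - 1) (hJ : ∀ j ∈ J, j ≤ n) :
    (∀ M : SemistandardYoungTableau lam, entryMultiset M = contentOfJ n k J →
      ∃! S : SemistandardYoungTableau lam,
        (IsStandard n S ∧ ∀ i ∈ DsiSet n S, i ∈ J) ∧
        ∀ r c, S r c = stdFun lam (entryFun M) r c) ∧
    (∀ S : SemistandardYoungTableau lam, IsStandard n S → (∀ i ∈ DsiSet n S, i ∈ J) →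
      ∃! M : SemistandardYoungTableau lam, entryMultiset M = contentOfJ n k J ∧
        ∀ r c, S r c = stdFun lam (entryFun M) r c) := by
  refine ⟨fun M hM => ?_, fun S hS hD => ?_⟩
  · refine ⟨standardize M, ⟨⟨isStandard_standardize M hcard, fun i hi => ?_⟩,
      standardize_apply M⟩, fun S hS => SemistandardYoungTableau.ext hS.2⟩
    exact mem_of_mem_DsiSet_standardize hk hcard hJcard hJ hM hi
  · have hcontent := entryMultiset_destandardize hS hD hk hJcard hJ
    refine ⟨destandardize J S hS hD, ⟨hcontent, fun r c => ?_⟩, fun M hM => ?_⟩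
    · rw [← standardize_apply, standardize_destandardize]
    · refine eq_of_standardize_eq (hM.1.trans hcontent.symm) ?_
      rw [standardize_destandardize]
      exact (SemistandardYoungTableau.ext hM.2).symm

theorem stmt1 (n k : ℕ) (hn : 1 ≤ n) (hk : 1 ≤ k)
    (lam : YoungDiagram) (hcard : lam.card = n)
    (J : Multiset ℕ) (hJcard : Multiset.card J = k - 1) (hJ : ∀ j ∈ J, j ≤ n) :
    (∀ M : SemistandardYoungTableau lam, entryMultiset M = contentOfJ n k J →
      ∃! S : SemistandardYoungTableau lam,
        (IsStandard n S ∧ ∀ i ∈ DsiSet n S, i ∈ J) ∧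
        ∀ r c, S r c = stdFun lam (entryFun M) r c) ∧
    (∀ S : SemistandardYoungTableau lam, IsStandard n S → (∀ i ∈ DsiSet n S, i ∈ J) →
      ∃! M : SemistandardYoungTableau lam, entryMultiset M = contentOfJ n k J ∧
        ∀ r c, S r c = stdFun lam (entryFun M) r c) :=
  stmt1_general n k hk lam hcard J hJcard hJ
end GHS
end
end

section
/- For any semistandard Young tableau M of shape λ ⊢ n with nonnegative integer entries, the sum of the elements of the multiset Dsp^c(M) (counted with multiplicity) equals the sum Σ(M) of all entries of M. -/
open MvPolynomial

noncomputable section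
open scoped Classical

namespace GHS

theorem stmt3 (n : ℕ) (hn : 1 ≤ n) (lam : YoungDiagram) (hcard : lam.card = n)
    (M : SemistandardYoungTableau lam) :
    (DspC n M).sum = entrySum M := by
  classical
  set f := entryFun M with hf
  set K := maxEntryF lam f with hKdef
  have hK : ∀ c ∈ lam.cells, f c.1 c.2 ≤ K := fun c hc => Finset.le_sup (f := fun c => f c.1 c.2) hc
  have key : (DspC n M).sum = ∑ h ∈ Finset.Icc 1 K, (n - countLtF lam f h) := rfl
  rw [key]
  have h1 : ∀ h, n - countLtF lam f h
      = (lam.cells.filter fun c => h ≤ f c.1 c.2).card := by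
    intro h
    have hsplit := Finset.card_filter_add_card_filter_not
      (s := lam.cells) (p := fun c => f c.1 c.2 < h)
    have hneg : (lam.cells.filter fun c => ¬ f c.1 c.2 < h)
        = lam.cells.filter fun c => h ≤ f c.1 c.2 := by
      apply Finset.filter_congr; intro c _; simp [not_lt]
    rw [hneg] at hsplit
    unfold countLtF
    have : lam.cells.card = n := by
      rw [← hcard]
    omega
  simp_rw [h1, Finset.card_filter]
  rw [Finset.sum_comm]
  have key2 : ∀ c ∈ lam.cells,
      (∑ h ∈ Finset.Icc 1 K, if h ≤ f c.1 c.2 then 1 else 0) = f c.1 c.2 := by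
    intro c hc
    have hle := hK c hc
    have hfilt : (Finset.Icc 1 K).filter (fun h => h ≤ f c.1 c.2)
        = Finset.Icc 1 (f c.1 c.2) := by
      ext h
      simp only [Finset.mem_filter, Finset.mem_Icc]
      omega
    rw [← Finset.card_filter, hfilt, Nat.card_Icc]
    omega
  rw [Finset.sum_congr rfl key2]
  rfl
end GHS
end
end

section
/- Let λ ⊢ n, let T be a tableau of shape λ with entries 1,...,n each appearing once, and let M be a semistandard tableau of shape λ with nonnegative entries. Then the generalized higher Specht polynomial F_{M,T} = ε_T p_{M,T} / s_{M,T} is a homogeneous polynomial in ℤ[x_1,...,x_n] of degree Σ(M), and it equals ∑_{σ ∈ C(T)} sgn(σ) σ(p_{M,T}) plus an integer linear combination of monomials y with p_{M,T} >_T y in the column-degree reverse lexicographic order. -/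
open MvPolynomial

noncomputable section
open scoped Classical

namespace GHS

private lemma exists_int_sum {ι : Type*} (s : Finset ι) (g : ι → ℚ)
    (h : ∀ i ∈ s, ∃ z : ℤ, g i = (z : ℚ)) : ∃ z : ℤ, ∑ i ∈ s, g i = (z : ℚ) := by
  classical
  induction s using Finset.induction_on with
  | empty => exact ⟨0, by simp⟩
  | @insert a s ha ih =>
    obtain ⟨z1, hz1⟩ := h a (Finset.mem_insert_self a s)
    obtain ⟨z2, hz2⟩ := ih (fun i hi => h i (Finset.mem_insert_of_mem hi))
    exact ⟨z1 + z2, by rw [Finset.sum_insert ha, hz1, hz2]; push_cast; ring⟩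

private lemma sum_le_of_maj {α : Type*} [DecidableEq α] (S A B : Finset α) (g : α → ℕ)
    (hA : A ⊆ S) (hB : B ⊆ S) (hc : B.card = A.card)
    (hle : ∀ a ∈ A, ∀ b ∈ S, b ∉ A → g b ≤ g a) :
    ∑ b ∈ B, g b ≤ ∑ a ∈ A, g a := by
  have hBsplit : ∑ b ∈ B ∩ A, g b + ∑ b ∈ B \ A, g b = ∑ b ∈ B, g b := by
    rw [← Finset.filter_mem_eq_inter, Finset.sdiff_eq_filter]
    exact Finset.sum_filter_add_sum_filter_not B (· ∈ A) g
  have hAsplit : ∑ b ∈ A ∩ B, g b + ∑ b ∈ A \ B, g b = ∑ b ∈ A, g b := by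
    rw [← Finset.filter_mem_eq_inter, Finset.sdiff_eq_filter]
    exact Finset.sum_filter_add_sum_filter_not A (· ∈ B) g
  have hcard : (B \ A).card = (A \ B).card := by
    have h1 := Finset.card_sdiff_add_card_inter B A
    have h2 := Finset.card_sdiff_add_card_inter A B
    rw [Finset.inter_comm] at h2
    omega
  have hkey : ∑ b ∈ B \ A, g b ≤ ∑ a ∈ A \ B, g a := by
    let e := Finset.equivOfCardEq hcard
    calc ∑ b ∈ B \ A, g b = ∑ x : (B \ A : Finset α), g x := (Finset.sum_coe_sort _ _).symm
      _ ≤ ∑ x : (B \ A : Finset α), g (e x) := by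
          apply Finset.sum_le_sum
          intro x _
          have hx := x.2
          have hex := (e x).2
          rw [Finset.mem_sdiff] at hx hex
          exact hle (e x) hex.1 x (hB hx.1) hx.2
      _ = ∑ y : (A \ B : Finset α), g y := Equiv.sum_comp e (fun y => g y)
      _ = ∑ a ∈ A \ B, g a := Finset.sum_coe_sort _ _
  calc ∑ b ∈ B, g b = ∑ b ∈ B ∩ A, g b + ∑ b ∈ B \ A, g b := hBsplit.symm
    _ ≤ ∑ b ∈ A ∩ B, g b + ∑ a ∈ A \ B, g a := by rw [Finset.inter_comm]; omega
    _ = ∑ a ∈ A, g a := hAsplit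

private lemma down_induction (P : ℕ → Prop) (N : ℕ) (hN : ∀ j, N ≤ j → P j)
    (step : ∀ j, P (j + 1) → P j) : ∀ j, P j := by
  have key : ∀ k j, N ≤ j + k → P j := by
    intro k
    induction k with
    | zero => intro j h; exact hN j (by omega)
    | succ k ih =>
      intro j h
      by_cases hj : N ≤ j
      · exact hN j hj
      · exact step j (ih (j + 1) (by omega))
  intro j
  exact key N j (by omega)

private def RTs (n : ℕ) (T : Fin n → ℕ × ℕ) (r j : ℕ) (d : Fin n →₀ ℕ) : ℕ :=
  ∑ i ∈ Finset.univ.filter (fun i => (T i).1 = r ∧ j ≤ (T i).2), d i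

private def DRs (n : ℕ) (T : Fin n → ℕ × ℕ) (r j : ℕ) (d : Fin n →₀ ℕ) : ℕ :=
  ∑ i ∈ Finset.univ.filter (fun i => (T i).1 = r ∧ (T i).2 = j), d i

private lemma RTs_split (n : ℕ) (T : Fin n → ℕ × ℕ) (r j : ℕ) (d : Fin n →₀ ℕ) :
    RTs n T r j d = DRs n T r j d + RTs n T r (j + 1) d := by
  unfold RTs DRs
  rw [← Finset.sum_filter_add_sum_filter_not
    (Finset.univ.filter fun i => (T i).1 = r ∧ j ≤ (T i).2) (fun i => (T i).2 = j) d]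
  congr 1
  · congr 1
    rw [Finset.filter_filter]
    apply Finset.filter_congr
    intro i _
    constructor
    · rintro ⟨⟨h1, _⟩, h3⟩; exact ⟨h1, h3⟩
    · rintro ⟨h1, h3⟩; exact ⟨⟨h1, by omega⟩, h3⟩
  · congr 1
    rw [Finset.filter_filter]
    apply Finset.filter_congr
    intro i _
    constructor
    · rintro ⟨⟨h1, h2⟩, h3⟩; exact ⟨h1, by omega⟩
    · rintro ⟨h1, h3⟩; exact ⟨⟨h1, by omega⟩, by omega⟩

private lemma RTs_zero (n : ℕ) (T : Fin n → ℕ × ℕ) (r j : ℕ) (d : Fin n →₀ ℕ)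
    (h : ∀ i, (T i).2 < j) : RTs n T r j d = 0 := by
  unfold RTs
  rw [Finset.filter_false_of_mem, Finset.sum_empty]
  intro i _
  rintro ⟨-, h2⟩
  exact absurd h2 (by have := h i; omega)

private lemma degT_zero (n : ℕ) (T : Fin n → ℕ × ℕ) (j : ℕ) (d : Fin n →₀ ℕ)
    (h : ∀ i, (T i).2 < j) : degT n T d j = 0 := by
  unfold degT
  rw [Finset.filter_false_of_mem, Finset.sum_empty]
  intro i _
  intro h2
  exact absurd h2 (by have := h i; omega)

private lemma degT_eq_sum_DRs (n : ℕ) (T : Fin n → ℕ × ℕ) (d : Fin n →₀ ℕ) (j : ℕ) :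
    degT n T d j = ∑ r ∈ Finset.univ.image (fun i => (T i).1), DRs n T r j d := by
  unfold degT DRs
  rw [← Finset.sum_fiberwise_of_maps_to (g := fun i => (T i).1)
    (t := Finset.univ.image fun i => (T i).1)
    (fun i _ => Finset.mem_image_of_mem _ (Finset.mem_univ i)) d]
  apply Finset.sum_congr rfl
  intro r _
  congr 1
  rw [Finset.filter_filter]
  apply Finset.filter_congr
  intro i _
  constructor
  · rintro ⟨h1, h2⟩; exact ⟨h2, h1⟩
  · rintro ⟨h1, h2⟩; exact ⟨h2, h1⟩

private lemma degT_colPerm (n : ℕ) (T : Fin n → ℕ × ℕ) (σ : Equiv.Perm (Fin n))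
    (hσ : ∀ i, (T (σ i)).2 = (T i).2) (d : Fin n →₀ ℕ) (j : ℕ) :
    degT n T (Finsupp.mapDomain ⇑σ d) j = degT n T d j := by
  unfold degT
  have h1 : ∀ i, Finsupp.mapDomain ⇑σ d i = d (σ.symm i) := by
    intro i
    conv_lhs => rw [show i = σ (σ.symm i) by simp]
    rw [Finsupp.mapDomain_apply (Equiv.injective σ)]
  rw [Finset.sum_congr rfl (fun i _ => h1 i)]
  apply Finset.sum_equiv σ.symm
  · intro i
    simp only [Finset.mem_filter, Finset.mem_univ, true_and]
    have := hσ (σ.symm i)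
    rw [Equiv.apply_symm_apply] at this
    rw [← this]
  · intro i _
    rfl

private lemma pmonF_eq (n : ℕ) (f : ℕ → ℕ → ℕ) (T : Fin n → ℕ × ℕ) :
    pmonF n f T = monomial (pexpF n f T) (1 : ℚ) := by
  unfold pmonF
  rw [← prod_X_pow_eq_monomial]
  symm
  apply Finset.prod_subset (Finset.subset_univ _)
  intro i _ hi
  rw [Finsupp.notMem_support_iff.mp hi, pow_zero]
private lemma core_gtT (n : ℕ) (lam : YoungDiagram) (T : Fin n → ℕ × ℕ)
    (hTinj : Function.Injective T) (hTmem : ∀ i, T i ∈ lam)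
    (M : SemistandardYoungTableau lam)
    (τ : Equiv.Perm (Fin n)) (hτ : ∀ i, (T (τ i)).1 = (T i).1)
    (u : Fin n →₀ ℕ) (hu : Finsupp.mapDomain ⇑τ (pexpF n (entryFun M) T) = u)
    (hne : u ≠ pexpF n (entryFun M) T) :
    gtT n T (pexpF n (entryFun M) T) u := by
  classical
  set p : Fin n →₀ ℕ := pexpF n (entryFun M) T with hpdef
  have hpi : ∀ i, p i = M (T i).1 (T i).2 := fun i => rfl
  have hui : ∀ i, u i = p (τ.symm i) := by
    intro i
    have h1 : u (τ (τ.symm i)) = p (τ.symm i) := by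
      rw [← hu, Finsupp.mapDomain_apply (Equiv.injective τ)]
    simpa using h1
  have hτ' : ∀ i, (T (τ.symm i)).1 = (T i).1 := by
    intro i
    have := hτ (τ.symm i)
    rw [Equiv.apply_symm_apply] at this
    exact this.symm
  set N : ℕ := (Finset.univ.sup fun i : Fin n => (T i).2) + 1 with hN
  have hcolN : ∀ i, (T i).2 < N :=
    fun i => Nat.lt_succ_of_le (Finset.le_sup (f := fun i => (T i).2) (Finset.mem_univ i))
  -- L1 : per-row tail inequality
  have L1 : ∀ r j, RTs n T r j u ≤ RTs n T r j p := by
    intro r j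
    set A := Finset.univ.filter (fun i : Fin n => (T i).1 = r ∧ j ≤ (T i).2) with hA
    set S := Finset.univ.filter (fun i : Fin n => (T i).1 = r) with hS
    have hAS : A ⊆ S := by
      intro i hi
      simp only [hA, hS, Finset.mem_filter, Finset.mem_univ, true_and] at hi ⊢
      exact hi.1
    set B := A.image ⇑τ.symm with hB
    have hBS : B ⊆ S := by
      intro b hb
      simp only [hB, Finset.mem_image] at hb
      obtain ⟨a, ha, rfl⟩ := hb
      simp only [hA, hS, Finset.mem_filter, Finset.mem_univ, true_and] at ha ⊢
      rw [hτ']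
      exact ha.1
    have hcardBA : B.card = A.card := Finset.card_image_of_injective _ (Equiv.injective _)
    have hstep : RTs n T r j u = ∑ b ∈ B, p b := by
      unfold RTs
      rw [← hA, Finset.sum_congr rfl (fun i _ => hui i), hB,
        Finset.sum_image (fun x _ y _ h => Equiv.injective _ h)]
    have hle : ∀ a ∈ A, ∀ b ∈ S, b ∉ A → p b ≤ p a := by
      intro a ha b hbS hbA
      simp only [hA, hS, Finset.mem_filter, Finset.mem_univ, true_and] at ha hbS hbA
      have hblt : (T b).2 < j := by
        by_contra hcon
        exact hbA ⟨hbS, le_of_not_gt hcon⟩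
      have hlt : (T b).2 < (T a).2 := lt_of_lt_of_le hblt ha.2
      have hcell : ((T a).1, (T a).2) ∈ lam := by
        have := hTmem a
        simpa using this
      rw [hpi a, hpi b, hbS, ha.1]
      exact M.row_weak hlt (by rwa [ha.1] at hcell)
    calc RTs n T r j u = ∑ b ∈ B, p b := hstep
      _ ≤ ∑ a ∈ A, p a := sum_le_of_maj S A B _ hAS hBS hcardBA hle
      _ = RTs n T r j p := by unfold RTs; rw [← hA]
  -- row fibers
  set Rfin := Finset.univ.image (fun i : Fin n => (T i).1) with hRfin
  have hDRempty : ∀ r j (d : Fin n →₀ ℕ), r ∉ Rfin → DRs n T r j d = 0 := by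
    intro r j d hr
    unfold DRs
    rw [Finset.filter_false_of_mem, Finset.sum_empty]
    intro i _
    rintro ⟨h1, -⟩
    exact hr (by rw [← h1, hRfin]; exact Finset.mem_image_of_mem _ (Finset.mem_univ i))
  -- downward induction
  have key_ind : ∀ j, ((∀ j', j ≤ j' → degT n T u j' = degT n T p j') →
      ∀ r, RTs n T r j u = RTs n T r j p) := by
    apply down_induction
      (fun j => (∀ j', j ≤ j' → degT n T u j' = degT n T p j') →
        ∀ r, RTs n T r j u = RTs n T r j p) N
    · intro j hj _ r
      rw [RTs_zero n T r j u (fun i => by have := hcolN i; omega),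
        RTs_zero n T r j p (fun i => by have := hcolN i; omega)]
    · intro j ih hdeg r
      have ih' : ∀ r', RTs n T r' (j + 1) u = RTs n T r' (j + 1) p :=
        ih (fun j' hj' => hdeg j' (by omega))
      have hDRle : ∀ r', DRs n T r' j u ≤ DRs n T r' j p := by
        intro r'
        have h1 := L1 r' j
        rw [RTs_split n T r' j u, RTs_split n T r' j p, ih' r'] at h1
        omega
      have hsum : ∑ r' ∈ Rfin, DRs n T r' j u = ∑ r' ∈ Rfin, DRs n T r' j p := by
        rw [hRfin, ← degT_eq_sum_DRs, ← degT_eq_sum_DRs]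
        exact hdeg j le_rfl
      have hDReq : ∀ r' ∈ Rfin, DRs n T r' j u = DRs n T r' j p :=
        (Finset.sum_eq_sum_iff_of_le (fun i _ => hDRle i)).mp hsum
      rw [RTs_split n T r j u, RTs_split n T r j p, ih' r]
      congr 1
      by_cases hr : r ∈ Rfin
      · exact hDReq r hr
      · rw [hDRempty r j u hr, hDRempty r j p hr]
  -- existence of a differing column
  have hexists : ∃ j, degT n T u j ≠ degT n T p j := by
    by_contra hcon
    push_neg at hcon
    have hall : ∀ j r, RTs n T r j u = RTs n T r j p :=
      fun j => key_ind j (fun j' _ => hcon j')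
    apply hne
    ext i
    have h1 := hall (T i).2 (T i).1
    have h2 := hall ((T i).2 + 1) (T i).1
    rw [RTs_split n T (T i).1 (T i).2 u, RTs_split n T (T i).1 (T i).2 p] at h1
    have hsing : ∀ d : Fin n →₀ ℕ, DRs n T (T i).1 (T i).2 d = d i := by
      intro d
      unfold DRs
      rw [show Finset.univ.filter
          (fun i' : Fin n => (T i').1 = (T i).1 ∧ (T i').2 = (T i).2) = {i} from ?_,
        Finset.sum_singleton]
      ext i'
      simp only [Finset.mem_filter, Finset.mem_univ, true_and, Finset.mem_singleton]
      constructor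
      · rintro ⟨ha, hb⟩
        exact hTinj (Prod.ext ha hb)
      · rintro rfl
        exact ⟨rfl, rfl⟩
    have hDR : DRs n T (T i).1 (T i).2 u = DRs n T (T i).1 (T i).2 p := by
      rw [h2] at h1
      omega
    rw [hsing, hsing] at hDR
    exact hDR
  obtain ⟨jw, hjw⟩ := hexists
  have hjwN : jw < N := by
    by_contra hcon
    exact hjw (by
      rw [degT_zero n T jw u (fun i => by have := hcolN i; omega),
        degT_zero n T jw p (fun i => by have := hcolN i; omega)])
  have hsne : ((Finset.range N).filter (fun j => degT n T u j ≠ degT n T p j)).Nonempty :=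
    ⟨jw, Finset.mem_filter.mpr ⟨Finset.mem_range.mpr hjwN, hjw⟩⟩
  obtain ⟨j0, hj0mem, hj0max⟩ :
      ∃ j0 ∈ (Finset.range N).filter (fun j => degT n T u j ≠ degT n T p j),
        ∀ j' ∈ (Finset.range N).filter (fun j => degT n T u j ≠ degT n T p j), j' ≤ j0 :=
    ⟨_, Finset.max'_mem _ hsne, fun j' hj' => Finset.le_max' _ j' hj'⟩
  have hj0ne : degT n T u j0 ≠ degT n T p j0 := (Finset.mem_filter.mp hj0mem).2
  have hgt : ∀ j', j0 < j' → degT n T u j' = degT n T p j' := by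
    intro j' hj'
    by_contra hcon
    by_cases hj'N : j' < N
    · have hmem := hj0max j' (Finset.mem_filter.mpr ⟨Finset.mem_range.mpr hj'N, hcon⟩)
      omega
    · exact hcon (by
        rw [degT_zero n T j' u (fun i => by have := hcolN i; omega),
          degT_zero n T j' p (fun i => by have := hcolN i; omega)])
  have hRT1 : ∀ r, RTs n T r (j0 + 1) u = RTs n T r (j0 + 1) p :=
    key_ind (j0 + 1) (fun j' hj' => hgt j' (by omega))
  have hDRle : ∀ r', DRs n T r' j0 u ≤ DRs n T r' j0 p := by
    intro r'
    have h1 := L1 r' j0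
    rw [RTs_split n T r' j0 u, RTs_split n T r' j0 p, hRT1 r'] at h1
    omega
  have hled : degT n T u j0 ≤ degT n T p j0 := by
    rw [degT_eq_sum_DRs, degT_eq_sum_DRs]
    exact Finset.sum_le_sum (fun r _ => hDRle r)
  exact ⟨j0, lt_of_le_of_ne hled hj0ne, fun j' hj' => (hgt j' hj').symm⟩
theorem stmt8 (n : ℕ) (hn : 1 ≤ n) (lam : YoungDiagram) (hcard : lam.card = n)
    (T : Fin n → ℕ × ℕ) (hT : IsTabloid n lam T) (M : SemistandardYoungTableau lam) :
    (∀ e : Fin n →₀ ℕ, ∃ z : ℤ, coeff e (FMT n M T) = (z : ℚ)) ∧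
    (FMT n M T).IsHomogeneous (entrySum M) ∧
    ∀ e ∈ (FMT n M T - antisym n T (pmonF n (entryFun M) T)).support,
      gtT n T (pexpF n (entryFun M) T) e := by
  classical
  obtain ⟨hTinj, hTmem⟩ := hT
  set f : ℕ → ℕ → ℕ := entryFun M with hfdef
  set p : Fin n →₀ ℕ := pexpF n f T with hpdef
  set G := rowGroup n T with hG
  have hrow_mem : ∀ {a : Equiv.Perm (Fin n)}, a ∈ G ↔ ∀ i, (T (a i)).1 = (T i).1 := by
    intro a
    simp [hG, rowGroup]
  have hcol_mem : ∀ {a : Equiv.Perm (Fin n)}, a ∈ colGroup n T ↔ ∀ i, (T (a i)).2 = (T i).2 := by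
    intro a
    simp [colGroup]
  have hone : (1 : Equiv.Perm (Fin n)) ∈ G := hrow_mem.mpr (fun i => rfl)
  have hmul : ∀ {a b : Equiv.Perm (Fin n)}, a ∈ G → b ∈ G → a * b ∈ G := by
    intro a b ha hb
    rw [hrow_mem] at ha hb ⊢
    intro i
    rw [Equiv.Perm.mul_apply, ha, hb]
  have hinv : ∀ {a : Equiv.Perm (Fin n)}, a ∈ G → a⁻¹ ∈ G := by
    intro a ha
    rw [hrow_mem] at ha ⊢
    intro i
    have := ha (a⁻¹ i)
    simpa using this.symm
  have hmdcomp : ∀ (a b : Equiv.Perm (Fin n)) (d : Fin n →₀ ℕ),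
      Finsupp.mapDomain ⇑(a * b) d = Finsupp.mapDomain ⇑a (Finsupp.mapDomain ⇑b d) := by
    intro a b d
    rw [show ⇑(a * b) = ⇑a ∘ ⇑b from rfl, Finsupp.mapDomain_comp]
  set cnt : (Fin n →₀ ℕ) → ℕ :=
    fun d => (G.filter fun τ : Equiv.Perm (Fin n) => Finsupp.mapDomain (⇑τ) p = d).card with hcnt
  have hstab : stabCardF n f T = cnt p := by
    unfold stabCardF
    rw [hcnt]
    congr 1
    apply Finset.filter_congr
    intro τ _
    rw [pmonF_eq n f T, rename_monomial]
    constructor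
    · intro h
      exact monomial_left_injective one_ne_zero h
    · intro h
      rw [h]
  have hcnt_full : ∀ d, (∃ τ0 ∈ G, Finsupp.mapDomain ⇑τ0 p = d) → cnt d = cnt p := by
    rintro d ⟨τ0, hτ0, hτ0d⟩
    rw [hcnt]
    apply Finset.card_bij (fun τ _ => τ0⁻¹ * τ)
    · intro a ha
      obtain ⟨haG, had⟩ := Finset.mem_filter.mp ha
      refine Finset.mem_filter.mpr ⟨hmul (hinv hτ0) haG, ?_⟩
      rw [hmdcomp, had, ← hτ0d, ← hmdcomp]
      simp
    · intro a _ b _ h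
      exact mul_left_cancel h
    · intro b hb
      obtain ⟨hbG, hbp⟩ := Finset.mem_filter.mp hb
      refine ⟨τ0 * b, Finset.mem_filter.mpr ⟨hmul hτ0 hbG, ?_⟩, by rw [inv_mul_cancel_left]⟩
      rw [hmdcomp, hbp, hτ0d]
  have hcntp_pos : 0 < cnt p := by
    rw [hcnt]
    apply Finset.card_pos.mpr
    exact ⟨1, Finset.mem_filter.mpr ⟨hone, by simp⟩⟩
  set c : ℚ := (stabCardF n f T : ℚ) with hc
  have hcne : c ≠ 0 := by
    rw [hc, hstab]
    exact Nat.cast_ne_zero.mpr (by omega)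
  set q : MvPolynomial (Fin n) ℚ := c⁻¹ • symRT n T (pmonF n f T) with hqdef
  have hqcoeff : ∀ d, coeff d q = c⁻¹ * (cnt d : ℚ) := by
    intro d
    rw [hqdef, coeff_smul, smul_eq_mul]
    congr 1
    unfold symRT
    rw [coeff_sum]
    rw [Finset.sum_congr rfl
      (fun τ _ => by rw [pmonF_eq, rename_monomial, coeff_monomial])]
    rw [Finset.sum_boole, hcnt, hG]
  have hq01 : ∀ d, coeff d q =
      if (∃ τ ∈ G, Finsupp.mapDomain ⇑τ p = d) then 1 else 0 := by
    intro d
    rw [hqcoeff]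
    split_ifs with h
    · rw [hcnt_full d h, hc, hstab]
      exact inv_mul_cancel₀ (Nat.cast_ne_zero.mpr (by omega))
    · have hz : cnt d = 0 := by
        rw [hcnt, Finset.card_eq_zero, Finset.filter_eq_empty_iff]
        intro τ hτ hmap
        exact h ⟨τ, hτ, hmap⟩
      rw [hz]
      simp
  have hqp : coeff p q = 1 := by
    rw [hq01, if_pos ⟨1, hone, by simp⟩]
  have hrename_smul : ∀ (σ : Equiv.Perm (Fin n)) (a : ℚ) (x : MvPolynomial (Fin n) ℚ),
      rename ⇑σ (a • x) = a • rename ⇑σ x := by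
    intro σ a x
    rw [smul_eq_C_mul, smul_eq_C_mul, map_mul, rename_C]
  have hFMT : FMT n M T = ∑ σ ∈ colGroup n T,
      ((Equiv.Perm.sign σ : ℤ) : ℚ) • rename ⇑σ q := by
    show c⁻¹ • youngSym n T (pmonF n f T) = _
    unfold youngSym antisym
    rw [Finset.smul_sum]
    apply Finset.sum_congr rfl
    intro σ _
    rw [hqdef, hrename_smul, smul_comm]
  have hdiff : FMT n M T - antisym n T (pmonF n f T) =
      ∑ σ ∈ colGroup n T, ((Equiv.Perm.sign σ : ℤ) : ℚ) • rename ⇑σ (q - pmonF n f T) := by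
    rw [hFMT]
    unfold antisym
    rw [← Finset.sum_sub_distrib]
    apply Finset.sum_congr rfl
    intro σ _
    rw [map_sub, smul_sub]
  refine ⟨?_, ?_, ?_⟩
  · -- integer coefficients
    intro e
    rw [hFMT, coeff_sum]
    apply exists_int_sum
    intro σ _
    rw [coeff_smul, smul_eq_mul]
    have he : Finsupp.mapDomain ⇑σ (Finsupp.mapDomain ⇑σ⁻¹ e) = e := by
      rw [← hmdcomp]
      simp
    obtain ⟨z, hz⟩ : ∃ z : ℤ, coeff e (rename ⇑σ q) = (z : ℚ) := by
      have h2 : coeff e (rename ⇑σ q) = coeff (Finsupp.mapDomain ⇑σ⁻¹ e) q := by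
        conv_lhs => rw [← he]
        exact coeff_rename_mapDomain _ (Equiv.injective σ) q _
      rw [h2, hq01]
      split_ifs
      · exact ⟨1, by norm_num⟩
      · exact ⟨0, by norm_num⟩
    exact ⟨(Equiv.Perm.sign σ : ℤ) * z, by rw [hz]; push_cast; ring⟩
  · -- homogeneous
    have hDdeg : p.degree = entrySum M := by
      have h1 : p.degree = ∑ i, p i :=
        Finset.sum_subset (Finset.subset_univ _)
          (fun i _ hi => Finsupp.notMem_support_iff.mp hi)
      have himg : Finset.image T Finset.univ = lam.cells := by
        apply Finset.eq_of_subset_of_card_le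
        · intro cc hcc
          obtain ⟨i, _, rfl⟩ := Finset.mem_image.mp hcc
          rw [YoungDiagram.mem_cells]
          exact hTmem i
        · rw [Finset.card_image_of_injective _ hTinj, Finset.card_univ, Fintype.card_fin]
          have hcc : lam.cells.card = lam.card := rfl
          omega
      have h2 : entrySum M = ∑ i, p i := by
        show entrySumF lam f = _
        unfold entrySumF
        rw [← himg, Finset.sum_image (fun x _ y _ h => hTinj h)]
        exact Finset.sum_congr rfl (fun i _ => rfl)
      rw [h1, h2]
    rw [hFMT]
    apply IsHomogeneous.sum
    intro σ _
    have hq_hom : q.IsHomogeneous (entrySum M) := by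
      rw [hqdef, smul_eq_C_mul]
      have hsym : (symRT n T (pmonF n f T)).IsHomogeneous (entrySum M) := by
        unfold symRT
        apply IsHomogeneous.sum
        intro τ _
        apply IsHomogeneous.rename_isHomogeneous
        rw [pmonF_eq]
        exact isHomogeneous_monomial _ hDdeg
      have := (isHomogeneous_C (σ := Fin n) c⁻¹).mul hsym
      rwa [zero_add] at this
    rw [smul_eq_C_mul]
    have h3 : ((rename ⇑σ) q).IsHomogeneous (entrySum M) :=
      IsHomogeneous.rename_isHomogeneous (f := ⇑σ) hq_hom
    have h4 := (isHomogeneous_C (σ := Fin n) ((Equiv.Perm.sign σ : ℤ) : ℚ)).mul h3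
    rwa [zero_add] at h4
  · -- leading-term statement
    intro e he
    rw [hdiff] at he
    obtain ⟨σ, hσmem, he2⟩ := Finset.mem_biUnion.mp (support_sum he)
    have he3 : e ∈ (rename ⇑σ (q - pmonF n f T)).support := support_smul he2
    obtain ⟨u, huσ, hu0⟩ := coeff_rename_ne_zero _ _ _ (mem_support_iff.mp he3)
    rw [coeff_sub] at hu0
    have hup : u ≠ p ∧ ∃ τ ∈ G, Finsupp.mapDomain ⇑τ p = u := by
      by_cases hupq : u = p
      · exfalso
        apply hu0
        rw [hupq, hqp, pmonF_eq, coeff_monomial, if_pos rfl]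
        ring
      · refine ⟨hupq, ?_⟩
        have hqu : coeff u q ≠ 0 := by
          intro h0
          apply hu0
          rw [h0, pmonF_eq, coeff_monomial, if_neg (fun h => hupq h.symm)]
          ring
        rw [hq01] at hqu
        by_contra hcon
        rw [if_neg hcon] at hqu
        exact hqu rfl
    obtain ⟨hune, τ, hτG, hτu⟩ := hup
    have hcore : gtT n T p u :=
      core_gtT n lam T hTinj hTmem M τ (hrow_mem.mp hτG) u hτu hune
    obtain ⟨j0, hlt, heq⟩ := hcore
    have hdeg_inv : ∀ j, degT n T e j = degT n T u j := by
      intro j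
      rw [← huσ]
      exact degT_colPerm n T σ (hcol_mem.mp hσmem) u j
    exact ⟨j0, by rw [hdeg_inv]; exact hlt, fun j' hj' => by rw [hdeg_inv]; exact heq j' hj'⟩

end GHS
end
end

section
/- Let λ ⊢ n, T a tableau of shape λ with content {1,...,n}, and M a semistandard tableau of shape λ with nonnegative entries. Then the polynomial (1/s_{M,T}) ∑_{τ ∈ R(T)} τ(p_{M,T}) is a sum of distinct monic monomials, all having the same exponent multiset as the entries of M (hence all of degree Σ(M)), and p_{M,T} is the unique largest among them in the order >_T. -/
open MvPolynomial

noncomputable section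
open scoped Classical

namespace GHS

/-!
Every term `τ(p_{M,T})` is the monomial with exponent `τ · p` (the exponent vector of `p_{M,T}`
permuted by `τ`), and the row permutations `τ` producing a given monomial form a coset of
the stabilizer, so each distinct monomial of the orbit occurs exactly `s_{M,T}` times.
For maximality: since `M` is weakly increasing along rows, `p` puts the largest exponents of
each row of `T` into its rightmost boxes, so in every row the exponents sitting in columns
`≥ c` add up to at most their value for `p`. If `τ · p ≠ p`, let `c` be the rightmost column
where the two differ; to the right of `c` they agree, so this row-suffix inequality gives
`(τ · p)_i ≤ p_i` at every box `i` of column `c`, strictly at some box, and hence a strictly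
smaller degree in column `c` with equal degrees in all later columns.
-/

open Finset

lemma sum_le_sum_of_card_eq {ι : Type*} [DecidableEq ι] {A B : Finset ι} (g : ι → ℕ)
    (hcard : #A = #B) (hg : ∀ a ∈ A, a ∉ B → ∀ b ∈ B, g a ≤ g b) :
    ∑ a ∈ A, g a ≤ ∑ b ∈ B, g b := by
  rw [← sum_sdiff_le_sum_sdiff]
  calc ∑ a ∈ A \ B, g a ≤ #(A \ B) • (A \ B).sup g :=
        sum_le_card_nsmul _ _ _ fun a ha => le_sup ha
    _ = #(B \ A) • (A \ B).sup g := by rw [card_sdiff_comm hcard]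
    _ ≤ ∑ b ∈ B \ A, g b := card_nsmul_le_sum _ _ _ fun b hb =>
        Finset.sup_le fun a ha => hg a (mem_sdiff.1 ha).1 (mem_sdiff.1 ha).2 b
          (mem_sdiff.1 hb).1

section RowGroup

variable {n : ℕ} {T : Fin n → ℕ × ℕ}

lemma mem_rowGroup {τ : Equiv.Perm (Fin n)} :
    τ ∈ rowGroup n T ↔ ∀ i, (T (τ i)).1 = (T i).1 := by
  simp [rowGroup]

lemma one_mem_rowGroup : (1 : Equiv.Perm (Fin n)) ∈ rowGroup n T :=
  mem_rowGroup.2 fun _ => rfl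

lemma mul_mem_rowGroup {σ τ : Equiv.Perm (Fin n)} (hσ : σ ∈ rowGroup n T)
    (hτ : τ ∈ rowGroup n T) : σ * τ ∈ rowGroup n T :=
  mem_rowGroup.2 fun i => (mem_rowGroup.1 hσ (τ i)).trans (mem_rowGroup.1 hτ i)

lemma inv_mem_rowGroup {τ : Equiv.Perm (Fin n)} (hτ : τ ∈ rowGroup n T) :
    τ⁻¹ ∈ rowGroup n T :=
  mem_rowGroup.2 fun i => by simpa using (mem_rowGroup.1 hτ (τ⁻¹ i)).symm

/-- The row permutations sending `d` to `τ₀ · d` form the coset `τ₀ · Stab(d)`. -/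
lemma card_rowGroup_mapDomain_eq {τ₀ : Equiv.Perm (Fin n)} (hτ₀ : τ₀ ∈ rowGroup n T)
    (d : Fin n →₀ ℕ) :
    #((rowGroup n T).filter fun τ : Equiv.Perm (Fin n) => d.mapDomain τ = d.mapDomain τ₀) =
      #((rowGroup n T).filter fun τ : Equiv.Perm (Fin n) => d.mapDomain τ = d) := by
  have hmul : ∀ σ τ : Equiv.Perm (Fin n),
      d.mapDomain ⇑(σ * τ) = (d.mapDomain τ).mapDomain σ :=
    fun σ τ => by rw [Equiv.Perm.coe_mul, Finsupp.mapDomain_comp]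
  refine card_bij' (fun τ _ => τ₀⁻¹ * τ) (fun τ _ => τ₀ * τ) ?_ ?_ (by simp) (by simp)
  · intro τ hτ
    simp only [mem_filter] at hτ ⊢
    refine ⟨mul_mem_rowGroup (inv_mem_rowGroup hτ₀) hτ.1, ?_⟩
    rw [hmul, hτ.2, ← hmul, inv_mul_cancel, Equiv.Perm.coe_one, Finsupp.mapDomain_id]
  · intro τ hτ
    simp only [mem_filter] at hτ ⊢
    exact ⟨mul_mem_rowGroup hτ₀ hτ.1, by rw [hmul, hτ.2]⟩

end RowGroup

section RowPoly

variable {n : ℕ} {f : ℕ → ℕ → ℕ} {T : Fin n → ℕ × ℕ}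

lemma pmonF_eq_monomial : pmonF n f T = monomial (pexpF n f T) 1 := by
  rw [monomial_eq, C_1, one_mul, Finsupp.prod_fintype _ _ fun _ => pow_zero _]
  rfl

lemma coeff_symRT_pmonF (e : Fin n →₀ ℕ) :
    coeff e (symRT n T (pmonF n f T)) =
      #((rowGroup n T).filter fun τ : Equiv.Perm (Fin n) => (pexpF n f T).mapDomain τ = e) := by
  simp only [symRT, coeff_sum, pmonF_eq_monomial, rename_monomial, coeff_monomial]
  rw [sum_boole]

lemma stabCardF_eq_card :
    stabCardF n f T = #((rowGroup n T).filter fun τ : Equiv.Perm (Fin n) =>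
      (pexpF n f T).mapDomain τ = pexpF n f T) := by
  simp only [stabCardF, pmonF_eq_monomial, rename_monomial,
    (monomial_left_injective one_ne_zero).eq_iff]

lemma stabCardF_pos : 0 < stabCardF n f T :=
  card_pos.2 ⟨1, mem_filter.2 ⟨one_mem_rowGroup, by simp⟩⟩

lemma coeff_rowPoly (e : Fin n →₀ ℕ) :
    coeff e (rowPoly n f T) =
      if ∃ τ ∈ rowGroup n T, (pexpF n f T).mapDomain τ = e then 1 else 0 := by
  rw [rowPoly, coeff_smul, coeff_symRT_pmonF, smul_eq_mul]
  split_ifs with he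
  · obtain ⟨τ₀, hτ₀, rfl⟩ := he
    have hs : (stabCardF n f T : ℚ) ≠ 0 := by exact_mod_cast stabCardF_pos.ne'
    rw [card_rowGroup_mapDomain_eq hτ₀, ← stabCardF_eq_card, inv_mul_cancel₀ hs]
  · rw [card_eq_zero.2 (filter_eq_empty_iff.2 fun τ hτ h => he ⟨τ, hτ, h⟩)]
    simp

lemma mem_support_rowPoly {e : Fin n →₀ ℕ} :
    e ∈ (rowPoly n f T).support ↔ ∃ τ ∈ rowGroup n T, (pexpF n f T).mapDomain τ = e := by
  rw [mem_support_iff, coeff_rowPoly]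
  split_ifs with he <;> simp [he]

lemma coeff_rowPoly_of_mem_support {e : Fin n →₀ ℕ} (he : e ∈ (rowPoly n f T).support) :
    coeff e (rowPoly n f T) = 1 := by
  rw [coeff_rowPoly, if_pos (mem_support_rowPoly.1 he)]

end RowPoly

lemma map_univ_mapDomain_perm {n : ℕ} (d : Fin n →₀ ℕ) (σ : Equiv.Perm (Fin n)) :
    univ.val.map (d.mapDomain σ) = univ.val.map d := by
  have h : ⇑(d.mapDomain σ) = d ∘ σ.symm := funext (Finsupp.mapDomain_equiv_apply d)
  rw [h, ← Multiset.map_map, Multiset.map_univ_val_equiv]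

lemma map_univ_pexpF {n : ℕ} {lam : YoungDiagram} {T : Fin n → ℕ × ℕ}
    (hT : IsTabloid n lam T) (hcard : lam.card = n) (f : ℕ → ℕ → ℕ) :
    univ.val.map (pexpF n f T) = entryMultisetF lam f := by
  have himage : univ.map ⟨T, hT.1⟩ = lam.cells :=
    eq_of_subset_of_card_le (fun c hc => by
        obtain ⟨i, -, rfl⟩ := mem_map.1 hc
        exact hT.2 i)
      (by rw [card_map, card_univ, Fintype.card_fin, ← hcard])
  have h : ⇑(pexpF n f T) = (fun c : ℕ × ℕ => f c.1 c.2) ∘ T := rfl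
  rw [entryMultisetF, ← himage, map_val, h, ← Multiset.map_map]
  rfl

section Dominance

variable {n : ℕ} {T : Fin n → ℕ × ℕ} {d : Fin n →₀ ℕ} {τ : Equiv.Perm (Fin n)}

lemma sum_row_suffix_mapDomain_le (hτ : τ ∈ rowGroup n T)
    (hrow : ∀ a b, (T a).1 = (T b).1 → (T a).2 ≤ (T b).2 → d a ≤ d b) (r c : ℕ) :
    ∑ i with (T i).1 = r ∧ c ≤ (T i).2, d.mapDomain τ i ≤
      ∑ i with (T i).1 = r ∧ c ≤ (T i).2, d i := by
  have hτrow := mem_rowGroup.1 hτ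
  have hreindex : ∑ i with (T i).1 = r ∧ c ≤ (T i).2, d.mapDomain τ i =
      ∑ k with (T k).1 = r ∧ c ≤ (T (τ k)).2, d k :=
    (sum_equiv τ (fun k => by simp [hτrow k])
      fun k _ => by rw [Finsupp.mapDomain_equiv_apply, Equiv.symm_apply_apply]).symm
  rw [hreindex]
  refine sum_le_sum_of_card_eq d (card_equiv τ fun k => by simp [hτrow k]) ?_
  intro a ha haB b hb
  simp only [mem_filter, mem_univ, true_and, not_and, not_le] at ha haB hb
  exact hrow a b (ha.1.trans hb.1.symm) ((haB ha.1).le.trans hb.2)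

lemma mapDomain_apply_le_of_eq_right (hinj : Function.Injective T) (hτ : τ ∈ rowGroup n T)
    (hrow : ∀ a b, (T a).1 = (T b).1 → (T a).2 ≤ (T b).2 → d a ≤ d b) (i₀ : Fin n)
    (hright : ∀ i, (T i₀).2 < (T i).2 → d.mapDomain τ i = d i) :
    d.mapDomain τ i₀ ≤ d i₀ := by
  set S : Finset (Fin n) := {i | (T i).1 = (T i₀).1 ∧ (T i₀).2 ≤ (T i).2}
  have hi₀ : i₀ ∈ S := by simp [S]
  have hright' : ∀ i ∈ S.erase i₀, d.mapDomain τ i = d i := by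
    intro i hi
    obtain ⟨hne, hS⟩ := mem_erase.1 hi
    simp only [S, mem_filter, mem_univ, true_and] at hS
    exact hright i (hS.2.lt_of_ne fun hc => hne (hinj (Prod.ext hS.1 hc.symm)))
  have hsuffix := sum_row_suffix_mapDomain_le hτ hrow (T i₀).1 (T i₀).2
  rw [← add_sum_erase S _ hi₀, ← add_sum_erase S _ hi₀,
    sum_congr rfl hright'] at hsuffix
  exact Nat.le_of_add_le_add_right hsuffix

lemma gtT_mapDomain (hinj : Function.Injective T) (hτ : τ ∈ rowGroup n T)
    (hrow : ∀ a b, (T a).1 = (T b).1 → (T a).2 ≤ (T b).2 → d a ≤ d b)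
    (hne : d.mapDomain τ ≠ d) : gtT n T d (d.mapDomain τ) := by
  set D : Finset (Fin n) := {i | d.mapDomain τ i ≠ d i}
  have hD : D.Nonempty := by
    obtain ⟨i, hi⟩ := DFunLike.ne_iff.1 hne
    exact ⟨i, by simpa [D] using hi⟩
  obtain ⟨i₀, hi₀, hmax⟩ := exists_max_image D (fun i => (T i).2) hD
  have hright : ∀ i, (T i₀).2 < (T i).2 → d.mapDomain τ i = d i := fun i hi => by
    by_contra h
    exact (hmax i (by simpa [D] using h)).not_gt hi
  refine ⟨(T i₀).2, ?_, fun j hj => (sum_congr rfl fun i hi => ?_).symm⟩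
  · refine sum_lt_sum (fun i hi => ?_) ⟨i₀, by simp, ?_⟩
    · simp only [mem_filter, mem_univ, true_and] at hi
      exact mapDomain_apply_le_of_eq_right hinj hτ hrow i fun i' hi' => hright i' (hi ▸ hi')
    · exact (mapDomain_apply_le_of_eq_right hinj hτ hrow i₀ hright).lt_of_ne
        (by simpa [D] using hi₀)
  · simp only [mem_filter, mem_univ, true_and] at hi
    exact hright i (hi ▸ hj)

end Dominance

lemma pexpF_row_mono {lam : YoungDiagram} (M : SemistandardYoungTableau lam) {n : ℕ}
    {T : Fin n → ℕ × ℕ} (hT : ∀ i, T i ∈ lam) (a b : Fin n) (hr : (T a).1 = (T b).1)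
    (hc : (T a).2 ≤ (T b).2) : pexpF n (entryFun M) T a ≤ pexpF n (entryFun M) T b := by
  change M (T a).1 (T a).2 ≤ M (T b).1 (T b).2
  rw [hr]
  exact M.row_weak_of_le hc (hT b)

theorem stmt9_general (n : ℕ) (lam : YoungDiagram) (hcard : lam.card = n)
    (T : Fin n → ℕ × ℕ) (hT : IsTabloid n lam T) (M : SemistandardYoungTableau lam) :
    (∀ e ∈ (rowPoly n (entryFun M) T).support, coeff e (rowPoly n (entryFun M) T) = 1) ∧
    (∀ e ∈ (rowPoly n (entryFun M) T).support,
      Finset.univ.val.map ⇑e = entryMultiset M) ∧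
    pexpF n (entryFun M) T ∈ (rowPoly n (entryFun M) T).support ∧
    ∀ e ∈ (rowPoly n (entryFun M) T).support,
      e ≠ pexpF n (entryFun M) T → gtT n T (pexpF n (entryFun M) T) e := by
  refine ⟨fun e he => coeff_rowPoly_of_mem_support he, fun e he => ?_,
    mem_support_rowPoly.2 ⟨1, one_mem_rowGroup, by simp⟩, fun e he hne => ?_⟩
  · obtain ⟨τ, -, rfl⟩ := mem_support_rowPoly.1 he
    rw [map_univ_mapDomain_perm, map_univ_pexpF hT hcard]
    rfl
  · obtain ⟨τ, hτ, rfl⟩ := mem_support_rowPoly.1 he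
    exact gtT_mapDomain hT.1 hτ (pexpF_row_mono M hT.2) hne

theorem stmt9 (n : ℕ) (hn : 1 ≤ n) (lam : YoungDiagram) (hcard : lam.card = n)
    (T : Fin n → ℕ × ℕ) (hT : IsTabloid n lam T) (M : SemistandardYoungTableau lam) :
    (∀ e ∈ (rowPoly n (entryFun M) T).support, coeff e (rowPoly n (entryFun M) T) = 1) ∧
    (∀ e ∈ (rowPoly n (entryFun M) T).support,
      Finset.univ.val.map ⇑e = entryMultiset M) ∧
    pexpF n (entryFun M) T ∈ (rowPoly n (entryFun M) T).support ∧
    ∀ e ∈ (rowPoly n (entryFun M) T).support,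
      e ≠ pexpF n (entryFun M) T → gtT n T (pexpF n (entryFun M) T) e :=
  stmt9_general n lam hcard T hT M
end GHS
end
end

section
/- Let λ ⊢ n, T a fixed tableau of shape λ with content {1,...,n}, and H a tableau of shape λ with nonnegative integer entries whose rows are non-decreasing and whose columns have pairwise distinct entries. Then there exists an element ρ of the column stabilizer C(T) taking H to a semistandard Young tableau M of the same shape and content as H. -/
open MvPolynomial

noncomputable section
open scoped Classical

namespace GHS

lemma dclosed_eq_range (s : Finset ℕ) (hs : ∀ a ∈ s, ∀ b < a, b ∈ s) :
    s = Finset.range s.card := by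
  have hlt : ∀ a ∈ s, a < s.card := by
    intro a ha
    have hsub : Finset.range (a + 1) ⊆ s := by
      intro b hb
      rcases Nat.lt_succ_iff_lt_or_eq.mp (Finset.mem_range.mp hb) with hb' | rfl
      · exact hs a ha b hb'
      · exact ha
    have := Finset.card_le_card hsub
    simpa using this
  exact Finset.eq_of_subset_of_card_le
    (fun a ha => Finset.mem_range.mpr (hlt a ha)) (by simp)

theorem stmt13 (n : ℕ) (hn : 1 ≤ n) (lam : YoungDiagram) (hcard : lam.card = n)
    (T : Fin n → ℕ × ℕ) (hT : IsTabloid n lam T) (h : Fin n → ℕ)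
    (hrow : ∀ i j, (T i).1 = (T j).1 → (T i).2 ≤ (T j).2 → h i ≤ h j)
    (hcol : ∀ i j, i ≠ j → (T i).2 = (T j).2 → h i ≠ h j) :
    ∃ ρ ∈ colGroup n T,
      (∀ i j, (T i).1 = (T j).1 → (T i).2 ≤ (T j).2 → h (ρ i) ≤ h (ρ j)) ∧
      (∀ i j, (T i).2 = (T j).2 → (T i).1 < (T j).1 → h (ρ i) < h (ρ j)) := by
  classical
  set col : ℕ → Finset (Fin n) := fun c => Finset.univ.filter (fun i => (T i).2 = c) with hcoldef
  have hmemcol : ∀ (i : Fin n) (c : ℕ), i ∈ col c ↔ (T i).2 = c := by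
    intro i c; simp [hcoldef]
  set rank : Fin n → ℕ := fun j => ((col (T j).2).filter (fun j' => h j' < h j)).card
    with hrankdef
  -- T is surjective onto the cells of lam
  have hsurj : ∀ p ∈ lam, ∃ i, T i = p := by
    intro p hp
    have himg : Finset.univ.image T = lam.cells := by
      apply Finset.eq_of_subset_of_card_le
      · intro q hq
        simp only [Finset.mem_image, Finset.mem_univ, true_and] at hq
        obtain ⟨i, rfl⟩ := hq
        exact (YoungDiagram.mem_cells _).mpr (hT.2 i)
      · rw [Finset.card_image_of_injective _ hT.1]
        have : lam.cells.card = n := hcard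
        simp [this]
    have hpmem : p ∈ Finset.univ.image T := by rw [himg]; exact (YoungDiagram.mem_cells _).mpr hp
    simp only [Finset.mem_image, Finset.mem_univ, true_and] at hpmem
    exact hpmem
  -- rank is strictly monotone in values, within a column
  have hrank_mono : ∀ i j : Fin n, (T i).2 = (T j).2 → h i < h j → rank i < rank j := by
    intro i j hc hij
    have hsub : (col (T i).2).filter (fun j' => h j' < h i) ⊆
        (col (T j).2).filter (fun j' => h j' < h j) := by
      rw [hc]
      intro x hx
      rw [Finset.mem_filter] at hx ⊢
      exact ⟨hx.1, lt_trans hx.2 hij⟩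
    have hss : (col (T i).2).filter (fun j' => h j' < h i) ⊂
        (col (T j).2).filter (fun j' => h j' < h j) := by
      refine (Finset.ssubset_iff_of_subset hsub).mpr ⟨i, ?_, ?_⟩
      · rw [Finset.mem_filter, hmemcol]; exact ⟨hc, hij⟩
      · rw [Finset.mem_filter]; rintro ⟨-, hlt⟩; exact lt_irrefl _ hlt
    exact Finset.card_lt_card hss
  have hrank_lt_iff : ∀ i j : Fin n, (T i).2 = (T j).2 → (rank i < rank j ↔ h i < h j) := by
    intro i j hc
    constructor
    · intro hr
      rcases lt_trichotomy (h i) (h j) with hlt | heq | hgt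
      · exact hlt
      · exfalso
        have : i = j := by
          by_contra hne
          exact hcol i j hne hc heq
        subst this; exact lt_irrefl _ hr
      · exact absurd (hrank_mono j i hc.symm hgt) (by omega)
    · exact hrank_mono i j hc
  have hrank_inj : ∀ c : ℕ, ∀ i ∈ col c, ∀ j ∈ col c, rank i = rank j → i = j := by
    intro c i hi j hj hr
    by_contra hne
    have hc : (T i).2 = (T j).2 := by
      rw [(hmemcol i c).mp hi, (hmemcol j c).mp hj]
    rcases lt_trichotomy (h i) (h j) with hlt | heq | hgt
    · exact absurd (hrank_mono i j hc hlt) (by omega)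
    · exact hcol i j hne hc heq
    · exact absurd (hrank_mono j i hc.symm hgt) (by omega)
  have hrank_lt_card : ∀ c : ℕ, ∀ i ∈ col c, rank i < (col c).card := by
    intro c i hi
    have hc : (T i).2 = c := (hmemcol i c).mp hi
    have hss : (col (T i).2).filter (fun j' => h j' < h i) ⊂ col c := by
      rw [hc]
      refine (Finset.ssubset_iff_of_subset (Finset.filter_subset _ _)).mpr ⟨i, hi, ?_⟩
      rw [Finset.mem_filter]; rintro ⟨-, hlt⟩; exact lt_irrefl _ hlt
    exact Finset.card_lt_card hss
  -- rows within a column are injective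
  have hrow_inj : ∀ c : ℕ, ∀ i ∈ col c, ∀ j ∈ col c, (T i).1 = (T j).1 → i = j := by
    intro c i hi j hj hr
    apply hT.1
    exact Prod.ext hr (by rw [(hmemcol i c).mp hi, (hmemcol j c).mp hj])
  -- the image of rows of a column equals range of its card
  have hrowimg : ∀ c : ℕ, (col c).image (fun i => (T i).1) = Finset.range (col c).card := by
    intro c
    have hinj : Set.InjOn (fun i => (T i).1) (col c) := by
      intro i hi j hj hij
      exact hrow_inj c i hi j hj hij
    have hcardimg := Finset.card_image_of_injOn hinj
    have hdc := dclosed_eq_range ((col c).image (fun i => (T i).1)) ?_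
    · rw [hcardimg] at hdc; exact hdc
    · intro a ha b hb
      simp only [Finset.mem_image] at ha ⊢
      obtain ⟨i, hi, rfl⟩ := ha
      have hci : (T i).2 = c := (hmemcol i c).mp hi
      have hmem : (b, c) ∈ lam := by
        apply lam.up_left_mem (le_of_lt hb) (le_of_eq hci.symm)
        rw [Prod.mk.eta]; exact hT.2 i
      obtain ⟨j, hj⟩ := hsurj _ hmem
      refine ⟨j, (hmemcol j c).mpr (by rw [hj]), by rw [hj]⟩
  have hrankimg : ∀ c : ℕ, (col c).image rank = Finset.range (col c).card := by
    intro c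
    apply Finset.eq_of_subset_of_card_le
    · intro a ha
      simp only [Finset.mem_image] at ha
      obtain ⟨i, hi, rfl⟩ := ha
      exact Finset.mem_range.mpr (hrank_lt_card c i hi)
    · rw [Finset.card_range, Finset.card_image_of_injOn
        (fun i hi j hj hij => hrank_inj c i hi j hj hij)]
  -- define the sorting map
  have hex : ∀ i : Fin n, ∃ j, j ∈ col (T i).2 ∧ rank j = (T i).1 := by
    intro i
    have h1 : (T i).1 ∈ (col (T i).2).image (fun k => (T k).1) :=
      Finset.mem_image_of_mem _ ((hmemcol i (T i).2).mpr rfl)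
    rw [hrowimg, ← hrankimg] at h1
    simp only [Finset.mem_image] at h1
    obtain ⟨j, hj, hrj⟩ := h1
    exact ⟨j, hj, hrj⟩
  set f : Fin n → Fin n := fun i => Classical.choose (hex i) with hfdef
  have hfspec : ∀ i, f i ∈ col (T i).2 ∧ rank (f i) = (T i).1 :=
    fun i => Classical.choose_spec (hex i)
  have hfcol : ∀ i, (T (f i)).2 = (T i).2 := fun i => (hmemcol _ _).mp (hfspec i).1
  have hfrank : ∀ i, rank (f i) = (T i).1 := fun i => (hfspec i).2
  have hfinj : Function.Injective f := by
    intro i j hij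
    have hc : (T i).2 = (T j).2 := by rw [← hfcol i, hij, hfcol j]
    have hr : (T i).1 = (T j).1 := by rw [← hfrank i, hij, hfrank j]
    exact hT.1 (Prod.ext hr hc)
  set ρ : Equiv.Perm (Fin n) :=
    Equiv.ofBijective f (Finite.injective_iff_bijective.mp hfinj) with hρdef
  have hρ : ∀ i, ρ i = f i := fun i => rfl
  refine ⟨ρ, ?_, ?_, ?_⟩
  · rw [colGroup, Finset.mem_filter]
    exact ⟨Finset.mem_univ _, fun i => by rw [hρ]; exact hfcol i⟩
  · -- rows weakly increasing
    intro i j hr hcle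
    rw [hρ, hρ]
    by_contra hcon
    push_neg at hcon
    set c := (T i).2 with hc
    set c' := (T j).2 with hc'
    set B : Finset (Fin n) := (col c').filter (fun j' => h j' ≤ h (f j)) with hBdef
    have hfjB : f j ∈ col c' := (hfspec j).1
    have hBcard : B.card = (T j).1 + 1 := by
      have hBeq : B = insert (f j) ((col c').filter (fun j' => h j' < h (f j))) := by
        ext x
        simp only [hBdef, hcoldef, Finset.mem_insert, Finset.mem_filter, Finset.mem_univ,
          true_and]
        constructor
        · rintro ⟨hx1, hx2⟩
          rcases lt_or_eq_of_le hx2 with hlt | heq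
          · exact Or.inr ⟨hx1, hlt⟩
          · left
            by_contra hne
            exact hcol x (f j) hne (by rw [hx1, (hmemcol (f j) c').mp hfjB]) heq
        · rintro (rfl | ⟨hx1, hx2⟩)
          · exact ⟨(hmemcol (f j) c').mp hfjB, le_refl _⟩
          · exact ⟨hx1, le_of_lt hx2⟩
      rw [hBeq, Finset.card_insert_of_notMem (by
        rw [Finset.mem_filter]; rintro ⟨-, hlt⟩; exact lt_irrefl _ hlt)]
      have : ((col c').filter (fun j' => h j' < h (f j))).card = rank (f j) := by
        rw [hrankdef]
        congr 1
        rw [hfcol j]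
      rw [this, hfrank j]
    -- the pushing-left map
    have hgex : ∀ j' ∈ B, ∃ i', T i' = ((T j').1, c) := by
      intro j' hj'
      have hj'c : (T j').2 = c' := (hmemcol j' c').mp (Finset.mem_filter.mp hj').1
      have hle2 : c ≤ (T j').2 := by rw [hj'c]; exact hcle
      exact hsurj _ (lam.up_left_mem (le_refl _) hle2
        (by rw [Prod.mk.eta]; exact hT.2 j'))
    set g : Fin n → Fin n := fun j' =>
      if hmem : ∃ i', T i' = ((T j').1, c) then Classical.choose hmem else j' with hgdef
    have hgspec : ∀ j' ∈ B, T (g j') = ((T j').1, c) := by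
      intro j' hj'
      rw [hgdef]
      simp only [dif_pos (hgex j' hj')]
      exact Classical.choose_spec (hgex j' hj')
    have hginj : Set.InjOn g B := by
      intro x hx y hy hxy
      have hTx := hgspec x hx
      have hTy := hgspec y hy
      have h1 : (T x).1 = (T y).1 := by
        have := hTx.symm.trans ((congrArg T hxy).trans hTy)
        exact (Prod.ext_iff.mp this).1
      exact hrow_inj c' x (Finset.mem_filter.mp hx).1 y (Finset.mem_filter.mp hy).1 h1
    have hsubA : B.image g ⊆ (col c).filter (fun x => h x < h (f i)) := by
      intro x hx
      simp only [Finset.mem_image] at hx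
      obtain ⟨j', hj', rfl⟩ := hx
      have hT' := hgspec j' hj'
      rw [Finset.mem_filter]
      constructor
      · exact (hmemcol _ c).mpr (by rw [hT'])
      · have h1 : h (g j') ≤ h j' := by
          apply hrow
          · rw [hT']
          · rw [hT']
            have hj'c : (T j').2 = c' := (hmemcol j' c').mp (Finset.mem_filter.mp hj').1
            rw [hj'c]; exact hcle
        have h2 : h j' ≤ h (f j) := (Finset.mem_filter.mp hj').2
        exact lt_of_le_of_lt (le_trans h1 h2) hcon
    have hcardA : (B.image g).card = (T j).1 + 1 := by
      rw [Finset.card_image_of_injOn hginj, hBcard]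
    have hle := Finset.card_le_card hsubA
    rw [hcardA] at hle
    have hrfi : ((col c).filter (fun x => h x < h (f i))).card = (T i).1 := by
      have : ((col c).filter (fun x => h x < h (f i))).card = rank (f i) := by
        rw [hrankdef]; congr 1; rw [hfcol i]
      rw [this, hfrank i]
    rw [hrfi] at hle
    omega
  · -- columns strictly increasing
    intro i j hceq hrlt
    rw [hρ, hρ]
    have hcc : (T (f i)).2 = (T (f j)).2 := by rw [hfcol i, hfcol j, hceq]
    apply (hrank_lt_iff (f i) (f j) hcc).mp
    rw [hfrank i, hfrank j]
    exact hrlt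
end GHS
end
end
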